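/- arXiv:1010.0881 — 9 statements merged into one kernel-verified Lean document; each statement's English description precedes it below -/
import Mathlib

section
/- Let A be a bounded subset of ℝⁿ and let a₀, a₁, ..., aₙ be n+1 points of A in general position (affinely independent). Then there exists φ > 0 such that for every point y ∈ A and every affine hyperplane V through y, there exists an index i ∈ {0,...,n} such that the chord from y to aᵢ forms an angle at least φ with V; equivalently, dist(aᵢ, V) / |aᵢ - y| ≥ sin φ. -/
/-! Since the `aᵢ` affinely span the space, the linear map `u ↦ (⟪u, aᵢ - aⱼ⟫)ᵢⱼ` is injective,
hence bounded below: some `|⟪u, aᵢ - aⱼ⟫|` is at least `2c‖u‖`, and by the triangle inequality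
some `|⟪u, aᵢ - y⟫|` is at least `c‖u‖`. For a unit normal `u` this is a lower bound for the
distance from `aᵢ` to the hyperplane, while `|aᵢ - y| ≤ D` for a bound `D ≥ 1` on the
distances in `A`; as `sin φ ≤ φ`, the angle `φ = c / D` works. -/

open scoped RealInnerProductSpace

open Metric Set

section

variable {E ι : Type*} [NormedAddCommGroup E] [InnerProductSpace ℝ E]

theorem abs_inner_sub_le_infDist {u : E} (hu : ‖u‖ = 1) (b y : E) :
    |⟪u, b - y⟫| ≤ infDist b {x | ⟪u, x - y⟫ = 0} := by
  refine (le_infDist ⟨y, by simp⟩).2 fun x (hx : ⟪u, x - y⟫ = 0) => ?_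
  calc |⟪u, b - y⟫| = |⟪u, b - x⟫| := by
        rw [← sub_add_sub_cancel b x y, inner_add_right, hx, add_zero]
    _ ≤ ‖u‖ * ‖b - x‖ := abs_real_inner_le_norm u _
    _ = dist b x := by rw [hu, one_mul, dist_eq_norm]

variable [FiniteDimensional ℝ E] [Fintype ι] {a : ι → E}

theorem exists_pos_mul_norm_le_abs_inner_sub_pair (ha : affineSpan ℝ (range a) = ⊤) :
    ∃ c > 0, ∀ u : E, ∃ i j, c * ‖u‖ ≤ |⟪u, a i - a j⟫| := by
  obtain ⟨i₀⟩ : Nonempty ι := by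
    have h := (affineSpan_nonempty ℝ).1 (by rw [ha, AffineSubspace.top_coe]; exact univ_nonempty)
    exact range_nonempty_iff_nonempty.1 h
  let T : E →ₗ[ℝ] ι × ι → ℝ := LinearMap.pi fun p => innerₛₗ ℝ (a p.1 - a p.2)
  have hT : LinearMap.ker T = ⊥ := by
    refine (Submodule.eq_bot_iff _).2 fun u hu => ?_
    have hspan : vectorSpan ℝ (range a) ≤ LinearMap.ker (innerₛₗ ℝ u) := by
      refine Submodule.span_le.2 ?_
      rintro _ ⟨_, ⟨i, rfl⟩, _, ⟨j, rfl⟩, rfl⟩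
      rw [SetLike.mem_coe, LinearMap.mem_ker, innerₛₗ_apply_apply, real_inner_comm]
      exact congr_fun hu (i, j)
    rw [← direction_affineSpan, ha, AffineSubspace.direction_top, top_le_iff] at hspan
    exact inner_self_eq_zero.1 (hspan ▸ Submodule.mem_top : u ∈ LinearMap.ker (innerₛₗ ℝ u))
  obtain ⟨K, -, hK⟩ := T.exists_antilipschitzWith hT
  obtain ⟨c, hc, hcT⟩ := antilipschitzWith_iff_exists_mul_le_norm.1 ⟨K, hK⟩
  refine ⟨c, hc, fun u => ?_⟩
  by_contra! h
  have hpos : 0 < c * ‖u‖ := (abs_nonneg _).trans_lt (h i₀ i₀)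
  refine (hcT u).not_gt ((pi_norm_lt_iff hpos).2 fun p => ?_)
  simpa only [T, LinearMap.pi_apply, innerₛₗ_apply_apply, Real.norm_eq_abs, real_inner_comm]
    using h p.1 p.2

theorem exists_pos_mul_norm_le_abs_inner_sub (ha : affineSpan ℝ (range a) = ⊤) :
    ∃ c > 0, ∀ u y : E, ∃ i, c * ‖u‖ ≤ |⟪u, a i - y⟫| := by
  obtain ⟨c, hc, hpair⟩ := exists_pos_mul_norm_le_abs_inner_sub_pair ha
  refine ⟨c / 2, half_pos hc, fun u y => ?_⟩
  obtain ⟨i, j, hij⟩ := hpair u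
  have hsum : c * ‖u‖ ≤ |⟪u, a i - y⟫| + |⟪u, a j - y⟫| := by
    calc c * ‖u‖ ≤ |⟪u, a i - a j⟫| := hij
      _ = |⟪u, a i - y⟫ - ⟪u, a j - y⟫| := by rw [← inner_sub_right, sub_sub_sub_cancel_right]
      _ ≤ _ := abs_sub _ _
  rcases le_total |⟪u, a i - y⟫| |⟪u, a j - y⟫| with h | h
  · exact ⟨j, by linarith⟩
  · exact ⟨i, by linarith⟩

end

/-- Lemma 4: for a bounded set `A` spanning ℝⁿ (witnessed by `n+1` affinely
independent points of `A`), there is `φ > 0` such that for every `y ∈ A` and every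
hyperplane `V` through `y` (given by a unit normal `u`), some chord `y aᵢ` subtends
an angle at least `φ` with `V`, i.e. `dist(aᵢ, V) ≥ sin φ · |aᵢ - y|`. -/
theorem stmt_0 (n : ℕ) (A : Set (EuclideanSpace ℝ (Fin n)))
    (hA : Bornology.IsBounded A)
    (a : Fin (n + 1) → EuclideanSpace ℝ (Fin n))
    (haA : ∀ i, a i ∈ A) (hind : AffineIndependent ℝ a) :
    ∃ φ > (0 : ℝ), ∀ y ∈ A, ∀ u : EuclideanSpace ℝ (Fin n), ‖u‖ = 1 →
      ∃ i : Fin (n + 1),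
        Real.sin φ * dist (a i) y ≤
          Metric.infDist (a i) {x | ⟪u, x - y⟫ = 0} := by
  obtain ⟨c, hc, hwidth⟩ := exists_pos_mul_norm_le_abs_inner_sub
    (hind.affineSpan_eq_top_iff_card_eq_finrank_add_one.2 (by simp))
  obtain ⟨C, hC⟩ := isBounded_iff.1 hA
  set D := max C 1
  have hD : 0 < D := one_pos.trans_le (le_max_right C 1)
  refine ⟨c / D, by positivity, fun y hy u hu => ?_⟩
  obtain ⟨i, hi⟩ := hwidth u y
  refine ⟨i, ?_⟩
  calc Real.sin (c / D) * dist (a i) y ≤ c / D * D :=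
        mul_le_mul (Real.sin_le (by positivity)) ((hC (haA i) hy).trans (le_max_left C 1))
          dist_nonneg (by positivity)
    _ = c * ‖u‖ := by rw [hu, mul_one, div_mul_cancel₀ c hD.ne']
    _ ≤ |⟪u, a i - y⟫| := hi
    _ ≤ _ := abs_inner_sub_le_infDist hu (a i) y
end

section
/- Let f₁(x) = M₁x + v₁ and f₂(x) = M₂x + v₂ with M₁ = [[λ₁, α],[0, ν₁]], v₁ = (1−λ₁, 0), M₂ = [[ν₂, 0],[β, λ₂]], v₂ = (0, 1−λ₂), where 0 < νᵢ ≤ λᵢ < 1, ν₁ + ν₂ < 1, α = ν₂ + λ₁ − 1, β = ν₁ + λ₂ − 1. Then f₁ and f₂ satisfy the open set condition with U = interior of the triangle T with vertices (0,0), (1,0), (0,1): f₁(U) and f₂(U) are disjoint subsets of U. -/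
/-!
Both maps send the open triangle `U` into itself by direct estimates. The images are
separated by the line through the origin and the common point `z = (ν₂, ν₁)`: the functional
`ν₁ x - ν₂ y` is positive on `f₁(U)` and negative on `f₂(U)`. Since `f₂` is `f₁` conjugated by
the coordinate swap (with the indices exchanged), both facts need only be proved for `f₁`.
-/

open Set

theorem ContinuousLinearMap.interior_setOf_le_apply {E : Type*} [NormedAddCommGroup E]
    [NormedSpace ℝ E] [CompleteSpace E] (φ : E →L[ℝ] ℝ) (hφ : Function.Surjective φ) (a : ℝ) :
    interior {x | a ≤ φ x} = {x | a < φ x} := by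
  have h := φ.interior_preimage hφ (Ici a)
  rw [interior_Ici] at h
  exact h

theorem ContinuousLinearMap.interior_setOf_apply_le {E : Type*} [NormedAddCommGroup E]
    [NormedSpace ℝ E] [CompleteSpace E] (φ : E →L[ℝ] ℝ) (hφ : Function.Surjective φ) (a : ℝ) :
    interior {x | φ x ≤ a} = {x | φ x < a} := by
  have h := φ.interior_preimage hφ (Iic a)
  rw [interior_Iic] at h
  exact h

def closedTriangle : Set (ℝ × ℝ) := {p | 0 ≤ p.1 ∧ 0 ≤ p.2 ∧ p.1 + p.2 ≤ 1}

def openTriangle : Set (ℝ × ℝ) := {p | 0 < p.1 ∧ 0 < p.2 ∧ p.1 + p.2 < 1}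

theorem convex_closedTriangle : Convex ℝ closedTriangle := by
  simp only [closedTriangle, ofPred_and]
  exact (convex_halfSpace_ge (ContinuousLinearMap.fst ℝ ℝ ℝ).isLinear 0).inter
    ((convex_halfSpace_ge (ContinuousLinearMap.snd ℝ ℝ ℝ).isLinear 0).inter
      (convex_halfSpace_le
        (ContinuousLinearMap.fst ℝ ℝ ℝ + ContinuousLinearMap.snd ℝ ℝ ℝ).isLinear 1))

theorem convexHull_triangle :
    convexHull ℝ ({(0, 0), (1, 0), (0, 1)} : Set (ℝ × ℝ)) = closedTriangle := by
  refine (convexHull_min ?_ convex_closedTriangle).antisymm fun p ⟨hx, hy, hxy⟩ => ?_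
  · rintro p (rfl | rfl | rfl) <;> norm_num [closedTriangle]
  · have hcomb := (convex_convexHull ℝ ({(0, 0), (1, 0), (0, 1)} : Set (ℝ × ℝ))).sum_mem
      (t := Finset.univ) (w := ![1 - p.1 - p.2, p.1, p.2]) (z := ![(0, 0), (1, 0), (0, 1)])
      (fun i _ => by fin_cases i <;> simp <;> linarith)
      (by simp [Fin.sum_univ_three]; ring)
      (fun i _ => subset_convexHull ℝ _ (by fin_cases i <;> simp))
    simpa [Fin.sum_univ_three] using hcomb

theorem interior_closedTriangle : interior closedTriangle = openTriangle := by
  let σ : ℝ × ℝ →L[ℝ] ℝ := ContinuousLinearMap.fst ℝ ℝ ℝ + ContinuousLinearMap.snd ℝ ℝ ℝ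
  have h1 := (ContinuousLinearMap.fst ℝ ℝ ℝ).interior_setOf_le_apply Prod.fst_surjective 0
  have h2 := (ContinuousLinearMap.snd ℝ ℝ ℝ).interior_setOf_le_apply Prod.snd_surjective 0
  have h3 := σ.interior_setOf_apply_le (fun r => ⟨(r, 0), by simp [σ]⟩) 1
  simp only [σ, FunLike.coe_add, Pi.add_apply, ContinuousLinearMap.coe_fst',
    ContinuousLinearMap.coe_snd'] at h1 h2 h3
  simp only [closedTriangle, openTriangle, ofPred_and, interior_inter, h1, h2, h3]

theorem swap_mem_openTriangle {p : ℝ × ℝ} (hp : p ∈ openTriangle) : p.swap ∈ openTriangle := by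
  obtain ⟨hx, hy, hxy⟩ := hp
  exact ⟨hy, hx, by simp only [Prod.fst_swap, Prod.snd_swap]; linarith⟩

/-- The affine map fixing `(1, 0)` and sending `(0, 1)` to `(n', n)`; the paper's `f₁` is
`cornerMap λ₁ ν₁ ν₂`. -/
def cornerMap (l n n' : ℝ) (p : ℝ × ℝ) : ℝ × ℝ :=
  (l * p.1 + (n' + l - 1) * p.2 + (1 - l), n * p.2)

section cornerMap

variable {l n n' : ℝ} {p : ℝ × ℝ}

theorem cornerMap_mem_openTriangle (hn : 0 < n) (hl : 0 ≤ l) (hl1 : l < 1) (hn' : 0 ≤ n')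
    (hsum : n + n' < 1) (hp : p ∈ openTriangle) : cornerMap l n n' p ∈ openTriangle := by
  obtain ⟨hx, hy, hxy⟩ := hp
  refine ⟨?_, mul_pos hn hy, ?_⟩
  · show 0 < l * p.1 + (n' + l - 1) * p.2 + (1 - l)
    nlinarith [mul_nonneg hl hx.le, mul_nonneg hn' hy.le,
      mul_pos (sub_pos.2 hl1) (sub_pos.2 (show p.2 < 1 by linarith))]
  · show l * p.1 + (n' + l - 1) * p.2 + (1 - l) + n * p.2 < 1
    nlinarith

theorem mul_cornerMap_snd_lt (hn : 0 < n) (hl : 0 ≤ l) (hl1 : l < 1) (hp : p ∈ openTriangle) :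
    n' * (cornerMap l n n' p).2 < n * (cornerMap l n n' p).1 := by
  obtain ⟨hx, hy, hxy⟩ := hp
  have hpos : 0 < n * (l * p.1 + (1 - l) * (1 - p.2)) := by
    have : 0 < (1 - l) * (1 - p.2) := mul_pos (by linarith) (by linarith)
    positivity
  calc n' * (cornerMap l n n' p).2
      = n * (cornerMap l n n' p).1 - n * (l * p.1 + (1 - l) * (1 - p.2)) := by
        simp only [cornerMap]; ring
    _ < n * (cornerMap l n n' p).1 := by linarith

end cornerMap

/-- Proposition 7 (open set condition): with `f₁, f₂` the affine maps determined by
the eigenvalue parameters `(λ₁, ν₁, λ₂, ν₂)` satisfying `0 < νᵢ ≤ λᵢ < 1`,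
`ν₁ + ν₂ < 1`, `α = ν₂ + λ₁ − 1`, `β = ν₁ + λ₂ − 1`, and `U` the interior of the
triangle with vertices `(0,0), (1,0), (0,1)`, the images `f₁(U)` and `f₂(U)` are
disjoint subsets of `U`. -/
theorem stmt_4 (l1 l2 n1 n2 a b : ℝ)
    (h1 : 0 < n1) (h1' : n1 ≤ l1) (h1'' : l1 < 1)
    (h2 : 0 < n2) (h2' : n2 ≤ l2) (h2'' : l2 < 1)
    (hsum : n1 + n2 < 1) (ha : a = n2 + l1 - 1) (hb : b = n1 + l2 - 1)
    (f1 f2 : ℝ × ℝ → ℝ × ℝ)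
    (hf1 : ∀ p, f1 p = (l1 * p.1 + a * p.2 + (1 - l1), n1 * p.2))
    (hf2 : ∀ p, f2 p = (n2 * p.1, b * p.1 + l2 * p.2 + (1 - l2)))
    (U : Set (ℝ × ℝ))
    (hU : U = interior (convexHull ℝ ({(0, 0), (1, 0), (0, 1)} : Set (ℝ × ℝ)))) :
    f1 '' U ⊆ U ∧ f2 '' U ⊆ U ∧ Disjoint (f1 '' U) (f2 '' U) := by
  obtain rfl : f1 = cornerMap l1 n1 n2 := funext fun p => by rw [hf1, ha]; rfl
  obtain rfl : f2 = Prod.swap ∘ cornerMap l2 n2 n1 ∘ Prod.swap := funext fun p => by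
    rw [hf2, hb]
    simp only [Function.comp, cornerMap, Prod.fst_swap, Prod.snd_swap, Prod.swap_prod_mk]
    congr 1
    ring
  rw [convexHull_triangle, interior_closedTriangle] at hU
  subst hU
  have hl1 : 0 ≤ l1 := by linarith
  have hl2 : 0 ≤ l2 := by linarith
  refine ⟨?_, ?_, Set.disjoint_left.2 ?_⟩
  · rintro _ ⟨p, hp, rfl⟩
    exact cornerMap_mem_openTriangle h1 hl1 h1'' h2.le hsum hp
  · rintro _ ⟨p, hp, rfl⟩
    exact swap_mem_openTriangle <| cornerMap_mem_openTriangle h2 hl2 h2'' h1.le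
      (by linarith) (swap_mem_openTriangle hp)
  · rintro _ ⟨p, hp, rfl⟩ ⟨q, hq, hpq⟩
    have hpos := mul_cornerMap_snd_lt (n' := n2) h1 hl1 h1'' hp
    have hneg := mul_cornerMap_snd_lt (n' := n1) h2 hl2 h2'' (swap_mem_openTriangle hq)
    simp only [Function.comp_apply] at hpq
    rw [← hpq, Prod.fst_swap, Prod.snd_swap] at hpos
    linarith
end

section
/- Suppose additionally λ₁ + ν₂ ≤ 1 and λ₂ + ν₁ ≤ 1 (equivalently α ≤ 0 and β ≤ 0). Then for all points y, y' of the attractor J, the difference y − y' lies in the cone W = {(w₁,w₂) : w₁w₂ ≤ 0} (second and fourth quadrants); consequently J is the graph of a decreasing function x₂ = ψ(x₁). -/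
/-!
In the sup metric on `ℝ × ℝ` both maps are contractions preserving the unit square, so `J` lies in
the square. Everything else rests on one maximum principle: a continuous function on a compact set
that is exceeded somewhere at each of its positive values is nonpositive. For the chord product
`(y₁ - y'₁) (y₂ - y'₂)` on `J × J`: a chord inside one piece `fᵢ '' J` is the image of a chord of
`J`, whose product gets multiplied by `λ₁ν₁` (or `ν₂λ₂`) plus a nonpositive shear term; a chord
between the two pieces lies in the cone because `f₁` maps the square to the lower right and `f₂`
to the upper left of the corner `(ν₂, ν₁)`. For `(y₂ - y'₂)²` on vertical chords the same principle
shows that there are none, so `J` is the graph of a function, decreasing by the cone property.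
-/

open Set Metric
open scoped NNReal

theorem IsCompact.nonpos_of_exists_gt {X : Type*} [TopologicalSpace X] {K : Set X} {φ : X → ℝ}
    (hK : IsCompact K) (hφ : ContinuousOn φ K) (h : ∀ y ∈ K, 0 < φ y → ∃ z ∈ K, φ y < φ z)
    {y : X} (hy : y ∈ K) : φ y ≤ 0 := by
  obtain ⟨y₀, hy₀, hmax⟩ := hK.exists_isMaxOn ⟨y, hy⟩ hφ
  by_contra! hpos
  obtain ⟨z, hz, hlt⟩ := h y₀ hy₀ (hpos.trans_le (hmax hy))
  exact (hmax hz).not_gt hlt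

theorem lt_of_le_mul_of_lt_one {u v c : ℝ} (hu : 0 < u) (hc₀ : 0 ≤ c) (hc₁ : c < 1)
    (h : u ≤ c * v) : u < v := by
  nlinarith

theorem LipschitzWith.infDist_le_mul_of_mapsTo {X : Type*} [PseudoMetricSpace X] {f : X → X}
    {K : ℝ≥0} {S : Set X} (hf : LipschitzWith K f) (hS : IsCompact S) (hSne : S.Nonempty)
    (hfS : MapsTo f S S) (x : X) : infDist (f x) S ≤ K * infDist x S := by
  obtain ⟨s, hs, hxs⟩ := hS.exists_infDist_eq_dist hSne x
  calc infDist (f x) S ≤ dist (f x) (f s) := infDist_le_dist_of_mem (hfS hs)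
    _ ≤ K * dist x s := hf.dist_le_mul x s
    _ = K * infDist x S := by rw [hxs]

theorem IsCompact.subset_of_subset_image_union {X : Type*} [MetricSpace X] {J S : Set X}
    {f g : X → X} {Kf Kg : ℝ≥0} (hJ : IsCompact J) (hS : IsCompact S) (hSne : S.Nonempty)
    (hf : ContractingWith Kf f) (hg : ContractingWith Kg g) (hfS : MapsTo f S S)
    (hgS : MapsTo g S S) (hcover : J ⊆ f '' J ∪ g '' J) : J ⊆ S := by
  intro y hy
  rw [hS.isClosed.mem_iff_infDist_zero hSne]
  refine le_antisymm (hJ.nonpos_of_exists_gt (continuous_infDist_pt S).continuousOn ?_ hy)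
    infDist_nonneg
  rintro _ hy hpos
  rcases hcover hy with ⟨z, hz, rfl⟩ | ⟨z, hz, rfl⟩
  · exact ⟨z, hz, lt_of_le_mul_of_lt_one hpos Kf.coe_nonneg hf.1
      (hf.2.infDist_le_mul_of_mapsTo hS hSne hfS z)⟩
  · exact ⟨z, hz, lt_of_le_mul_of_lt_one hpos Kg.coe_nonneg hg.1
      (hg.2.infDist_le_mul_of_mapsTo hS hSne hgS z)⟩

theorem ContractingWith.toNNReal_of_dist_le_mul {X : Type*} [MetricSpace X] {f : X → X}
    {c : ℝ} (hc₀ : 0 ≤ c) (hc₁ : c < 1) (h : ∀ x y, dist (f x) (f y) ≤ c * dist x y) :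
    ContractingWith c.toNNReal f :=
  ⟨Real.toNNReal_lt_one.2 hc₁, LipschitzWith.of_dist_le_mul fun x y => by
    rw [Real.coe_toNNReal c hc₀]; exact h x y⟩

theorem abs_mul_add_mul_le (a b u v : ℝ) : |a * u + b * v| ≤ (|a| + |b|) * max |u| |v| :=
  calc |a * u + b * v| ≤ |a| * |u| + |b| * |v| := by
        rw [← abs_mul, ← abs_mul]; exact abs_add_le _ _
    _ ≤ |a| * max |u| |v| + |b| * max |u| |v| := by
        gcongr
        exacts [le_max_left _ _, le_max_right _ _]
    _ = (|a| + |b|) * max |u| |v| := by ring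

theorem dist_le_of_sub_eq {F : ℝ × ℝ → ℝ × ℝ} {a b c d : ℝ}
    (h₁ : ∀ p q, (F p).1 - (F q).1 = a * (p.1 - q.1) + b * (p.2 - q.2))
    (h₂ : ∀ p q, (F p).2 - (F q).2 = c * (p.1 - q.1) + d * (p.2 - q.2)) (p q : ℝ × ℝ) :
    dist (F p) (F q) ≤ max (|a| + |b|) (|c| + |d|) * dist p q := by
  have hd : dist p q = max |p.1 - q.1| |p.2 - q.2| := rfl
  rw [Prod.dist_eq, Real.dist_eq, Real.dist_eq, h₁, h₂, hd]
  exact max_le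
    ((abs_mul_add_mul_le a b _ _).trans (by gcongr; exact le_max_left _ _))
    ((abs_mul_add_mul_le c d _ _).trans (by gcongr; exact le_max_right _ _))

theorem exists_antitone_graph_eq {J : Set (ℝ × ℝ)} (hJ : IsCompact J)
    (hcone : ∀ y ∈ J, ∀ y' ∈ J, (y.1 - y'.1) * (y.2 - y'.2) ≤ 0)
    (hvert : ∀ y ∈ J, ∀ y' ∈ J, y.1 = y'.1 → y.2 = y'.2) :
    ∃ ψ : ℝ → ℝ, Antitone ψ ∧ J = (fun x => (x, ψ x)) '' (Prod.fst '' J) := by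
  set g : ℝ → ℝ := fun x => sSup {v | (x, v) ∈ J}
  have hg : ∀ p ∈ J, g p.1 = p.2 := by
    intro p hp
    have hfiber : {v | (p.1, v) ∈ J} = {p.2} :=
      eq_singleton_iff_unique_mem.2 ⟨hp, fun v hv => hvert _ hv p hp rfl⟩
    simp only [g, hfiber, csSup_singleton]
  have hgJ : g '' (Prod.fst '' J) ⊆ Prod.snd '' J := by
    rintro _ ⟨_, ⟨p, hp, rfl⟩, rfl⟩
    exact ⟨p, hp, (hg p hp).symm⟩
  have hanti : AntitoneOn g (Prod.fst '' J) := by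
    rintro _ ⟨p, hp, rfl⟩ _ ⟨p', hp', rfl⟩ hle
    rw [hg p hp, hg p' hp']
    rcases hle.eq_or_lt with heq | hlt
    · exact (hvert p' hp' p hp heq.symm).le
    · nlinarith [hcone p hp p' hp']
  have hsnd := hJ.image continuous_snd
  obtain ⟨ψ, hψ, hgψ⟩ := hanti.exists_antitone_extension (hsnd.bddBelow.mono hgJ)
    (hsnd.bddAbove.mono hgJ)
  have hψJ : ∀ p ∈ J, ψ p.1 = p.2 := fun p hp => (hgψ ⟨p, hp, rfl⟩).symm.trans (hg p hp)
  refine ⟨ψ, hψ, Subset.antisymm (fun p hp => ⟨p.1, ⟨p, hp, rfl⟩, Prod.ext rfl (hψJ p hp)⟩) ?_⟩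
  rintro _ ⟨_, ⟨q, hq, rfl⟩, rfl⟩
  show (q.1, ψ q.1) ∈ J
  rwa [hψJ q hq]

-- `lᵢ` and `nᵢ` stand for the paper's `λᵢ` and `νᵢ`.
structure TriangularIFS where
  (l₁ l₂ n₁ n₂ : ℝ)
  n₁_pos : 0 < n₁
  n₁_le_l₁ : n₁ ≤ l₁
  l₁_lt_one : l₁ < 1
  n₂_pos : 0 < n₂
  n₂_le_l₂ : n₂ ≤ l₂
  l₂_lt_one : l₂ < 1
  l₁_add_n₂_le_one : l₁ + n₂ ≤ 1
  l₂_add_n₁_le_one : l₂ + n₁ ≤ 1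

namespace TriangularIFS

variable (P : TriangularIFS)

def α : ℝ := P.n₂ + P.l₁ - 1

def β : ℝ := P.n₁ + P.l₂ - 1

def f₁ (p : ℝ × ℝ) : ℝ × ℝ := (P.l₁ * p.1 + P.α * p.2 + (1 - P.l₁), P.n₁ * p.2)

def f₂ (p : ℝ × ℝ) : ℝ × ℝ := (P.n₂ * p.1, P.β * p.1 + P.l₂ * p.2 + (1 - P.l₂))

theorem l₁_pos : 0 < P.l₁ := P.n₁_pos.trans_le P.n₁_le_l₁

theorem l₂_pos : 0 < P.l₂ := P.n₂_pos.trans_le P.n₂_le_l₂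

theorem α_nonpos : P.α ≤ 0 := by unfold α; linarith [P.l₁_add_n₂_le_one]

theorem β_nonpos : P.β ≤ 0 := by unfold β; linarith [P.l₂_add_n₁_le_one]

/- The target rectangles of `mapsTo_f₁` and `mapsTo_f₂` meet only at the corner
`(ν₂, ν₁) = f₁ (0, 1) = f₂ (1, 0)`. -/
theorem mapsTo_f₁ : MapsTo P.f₁ (Icc 0 1 ×ˢ Icc 0 1) (Icc P.n₂ 1 ×ˢ Icc 0 P.n₁) := by
  rintro ⟨x, y⟩ ⟨⟨hx₀, hx₁⟩, hy₀, hy₁⟩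
  have := P.l₁_pos
  have := P.n₁_pos
  have := P.α_nonpos
  simp only [f₁, mem_prod, mem_Icc]
  refine ⟨⟨?_, ?_⟩, ?_, ?_⟩ <;> nlinarith [show P.α = P.n₂ + P.l₁ - 1 from rfl]

theorem mapsTo_f₂ : MapsTo P.f₂ (Icc 0 1 ×ˢ Icc 0 1) (Icc 0 P.n₂ ×ˢ Icc P.n₁ 1) := by
  rintro ⟨x, y⟩ ⟨⟨hx₀, hx₁⟩, hy₀, hy₁⟩
  have := P.l₂_pos
  have := P.n₂_pos
  have := P.β_nonpos
  simp only [f₂, mem_prod, mem_Icc]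
  refine ⟨⟨?_, ?_⟩, ?_, ?_⟩ <;> nlinarith [show P.β = P.n₁ + P.l₂ - 1 from rfl]

theorem mapsTo_f₁_square : MapsTo P.f₁ (Icc 0 1 ×ˢ Icc 0 1) (Icc 0 1 ×ˢ Icc 0 1) :=
  P.mapsTo_f₁.mono_right <| prod_mono (Icc_subset_Icc P.n₂_pos.le le_rfl)
    (Icc_subset_Icc le_rfl (P.n₁_le_l₁.trans P.l₁_lt_one.le))

theorem mapsTo_f₂_square : MapsTo P.f₂ (Icc 0 1 ×ˢ Icc 0 1) (Icc 0 1 ×ˢ Icc 0 1) :=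
  P.mapsTo_f₂.mono_right <| prod_mono (Icc_subset_Icc le_rfl (P.n₂_le_l₂.trans P.l₂_lt_one.le))
    (Icc_subset_Icc P.n₁_pos.le le_rfl)

theorem contractingWith_f₁ : ContractingWith (1 - min P.n₁ P.n₂).toNNReal P.f₁ := by
  have := min_le_right P.n₁ P.n₂
  have := P.n₁_le_l₁
  have := P.l₁_add_n₂_le_one
  have hrow : max (|P.l₁| + |P.α|) (|0| + |P.n₁|) ≤ 1 - min P.n₁ P.n₂ := by
    rw [abs_of_pos P.l₁_pos, abs_of_nonpos P.α_nonpos, abs_zero, abs_of_pos P.n₁_pos]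
    exact max_le (by unfold α; linarith) (by linarith)
  refine .toNNReal_of_dist_le_mul ((le_max_of_le_right (by positivity)).trans hrow)
    (by linarith [lt_min P.n₁_pos P.n₂_pos])
    fun p q => (dist_le_of_sub_eq (fun p q => ?_) (fun p q => ?_) p q).trans
      (mul_le_mul_of_nonneg_right hrow dist_nonneg) <;>
  · simp only [f₁]; ring

theorem contractingWith_f₂ : ContractingWith (1 - min P.n₁ P.n₂).toNNReal P.f₂ := by
  have := min_le_left P.n₁ P.n₂
  have := P.n₂_le_l₂
  have := P.l₂_add_n₁_le_one
  have hrow : max (|P.n₂| + |0|) (|P.β| + |P.l₂|) ≤ 1 - min P.n₁ P.n₂ := by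
    rw [abs_of_pos P.l₂_pos, abs_of_nonpos P.β_nonpos, abs_zero, abs_of_pos P.n₂_pos]
    exact max_le (by linarith) (by unfold β; linarith)
  refine .toNNReal_of_dist_le_mul ((le_max_of_le_left (by positivity)).trans hrow)
    (by linarith [lt_min P.n₁_pos P.n₂_pos])
    fun p q => (dist_le_of_sub_eq (fun p q => ?_) (fun p q => ?_) p q).trans
      (mul_le_mul_of_nonneg_right hrow dist_nonneg) <;>
  · simp only [f₂]; ring

theorem subset_square {J : Set (ℝ × ℝ)} (hJc : IsCompact J) (hJ : J ⊆ P.f₁ '' J ∪ P.f₂ '' J) :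
    J ⊆ Icc 0 1 ×ˢ Icc 0 1 :=
  hJc.subset_of_subset_image_union (isCompact_Icc.prod isCompact_Icc)
    ((nonempty_Icc.2 zero_le_one).prod (nonempty_Icc.2 zero_le_one))
    P.contractingWith_f₁ P.contractingWith_f₂ P.mapsTo_f₁_square P.mapsTo_f₂_square hJ

theorem chord_f₁_le (p q : ℝ × ℝ) :
    ((P.f₁ p).1 - (P.f₁ q).1) * ((P.f₁ p).2 - (P.f₁ q).2) ≤
      P.l₁ * P.n₁ * ((p.1 - q.1) * (p.2 - q.2)) := by
  have hshear : P.α * P.n₁ * (p.2 - q.2) ^ 2 ≤ 0 :=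
    mul_nonpos_of_nonpos_of_nonneg (mul_nonpos_of_nonpos_of_nonneg P.α_nonpos P.n₁_pos.le)
      (sq_nonneg _)
  have hexpand : ((P.f₁ p).1 - (P.f₁ q).1) * ((P.f₁ p).2 - (P.f₁ q).2) =
      P.l₁ * P.n₁ * ((p.1 - q.1) * (p.2 - q.2)) + P.α * P.n₁ * (p.2 - q.2) ^ 2 := by
    simp only [f₁]; ring
  linarith

theorem chord_f₂_le (p q : ℝ × ℝ) :
    ((P.f₂ p).1 - (P.f₂ q).1) * ((P.f₂ p).2 - (P.f₂ q).2) ≤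
      P.n₂ * P.l₂ * ((p.1 - q.1) * (p.2 - q.2)) := by
  have hshear : P.n₂ * P.β * (p.1 - q.1) ^ 2 ≤ 0 :=
    mul_nonpos_of_nonpos_of_nonneg (mul_nonpos_of_nonneg_of_nonpos P.n₂_pos.le P.β_nonpos)
      (sq_nonneg _)
  have hexpand : ((P.f₂ p).1 - (P.f₂ q).1) * ((P.f₂ p).2 - (P.f₂ q).2) =
      P.n₂ * P.l₂ * ((p.1 - q.1) * (p.2 - q.2)) + P.n₂ * P.β * (p.1 - q.1) ^ 2 := by
    simp only [f₂]; ring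
  linarith

theorem chord_f₁_f₂_nonpos {p q : ℝ × ℝ} (hp : p ∈ Icc 0 1 ×ˢ Icc 0 1)
    (hq : q ∈ Icc 0 1 ×ˢ Icc 0 1) :
    ((P.f₁ p).1 - (P.f₂ q).1) * ((P.f₁ p).2 - (P.f₂ q).2) ≤ 0 :=
  have h₁ := P.mapsTo_f₁ hp
  have h₂ := P.mapsTo_f₂ hq
  mul_nonpos_of_nonneg_of_nonpos (by linarith [h₁.1.1, h₂.1.2]) (by linarith [h₁.2.2, h₂.2.1])

theorem chord_mul_nonpos {J : Set (ℝ × ℝ)} (hJc : IsCompact J)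
    (hJ : J ⊆ P.f₁ '' J ∪ P.f₂ '' J) :
    ∀ y ∈ J, ∀ y' ∈ J, (y.1 - y'.1) * (y.2 - y'.2) ≤ 0 := by
  have hsq := P.subset_square hJc hJ
  have hl₁n₁ : P.l₁ * P.n₁ < 1 :=
    mul_lt_one_of_nonneg_of_lt_one_left P.l₁_pos.le P.l₁_lt_one (P.n₁_le_l₁.trans P.l₁_lt_one.le)
  have hn₂l₂ : P.n₂ * P.l₂ < 1 :=
    mul_lt_one_of_nonneg_of_lt_one_right (P.n₂_le_l₂.trans P.l₂_lt_one.le) P.l₂_pos.le P.l₂_lt_one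
  intro y hy y' hy'
  refine (hJc.prod hJc).nonpos_of_exists_gt (φ := fun q => (q.1.1 - q.2.1) * (q.1.2 - q.2.2))
    (by fun_prop) ?_ (mk_mem_prod hy hy')
  rintro ⟨_, _⟩ ⟨hy, hy'⟩ hpos
  rcases hJ hy with ⟨z, hz, rfl⟩ | ⟨z, hz, rfl⟩ <;>
    rcases hJ hy' with ⟨z', hz', rfl⟩ | ⟨z', hz', rfl⟩
  · exact ⟨(z, z'), mk_mem_prod hz hz',
      lt_of_le_mul_of_lt_one hpos (mul_pos P.l₁_pos P.n₁_pos).le hl₁n₁ (P.chord_f₁_le z z')⟩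
  · exact absurd (P.chord_f₁_f₂_nonpos (hsq hz) (hsq hz')) hpos.not_ge
  · rw [← neg_sub (P.f₁ z').1, ← neg_sub (P.f₁ z').2, neg_mul_neg] at hpos
    exact absurd (P.chord_f₁_f₂_nonpos (hsq hz') (hsq hz)) hpos.not_ge
  · exact ⟨(z, z'), mk_mem_prod hz hz',
      lt_of_le_mul_of_lt_one hpos (mul_pos P.n₂_pos P.l₂_pos).le hn₂l₂ (P.chord_f₂_le z z')⟩

theorem fst_eq_zero_of_f₁_fst_le {p : ℝ × ℝ} (hp : p ∈ Icc 0 1 ×ˢ Icc 0 1)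
    (h : (P.f₁ p).1 ≤ P.n₂) : p.1 = 0 := by
  have hshear := mul_nonneg (neg_nonneg.2 P.α_nonpos) (sub_nonneg.2 hp.2.2)
  simp only [f₁] at h
  unfold α at h hshear
  nlinarith [hp.1.1, P.l₁_pos]

theorem fst_eq_one_of_f₁_fst_eq_one {p : ℝ × ℝ} (hp : p ∈ Icc 0 1 ×ˢ Icc 0 1)
    (h : (P.f₁ p).1 = 1) : p.1 = 1 := by
  have hshear := mul_nonneg (neg_nonneg.2 P.α_nonpos) hp.2.1
  simp only [f₁] at h
  nlinarith [hp.1.2, P.l₁_pos]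

theorem fst_eq_one_of_le_f₂_fst {p : ℝ × ℝ} (hp : p ∈ Icc 0 1 ×ˢ Icc 0 1)
    (h : P.n₂ ≤ (P.f₂ p).1) : p.1 = 1 := by
  simp only [f₂] at h
  nlinarith [hp.1.2, P.n₂_pos]

theorem fst_eq_of_f₁_fst_eq {p q : ℝ × ℝ} (hcone : (p.1 - q.1) * (p.2 - q.2) ≤ 0)
    (h : (P.f₁ p).1 = (P.f₁ q).1) : p.1 = q.1 := by
  have hshear := mul_nonneg_of_nonpos_of_nonpos P.α_nonpos hcone
  have hlin : P.l₁ * (p.1 - q.1) + P.α * (p.2 - q.2) = 0 := by simp only [f₁] at h; linarith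
  have hsq : P.l₁ * (p.1 - q.1) ^ 2 ≤ 0 := by linear_combination (p.1 - q.1) * hlin + hshear
  exact sub_eq_zero.1 (pow_eq_zero_iff two_ne_zero |>.1
    ((nonpos_of_mul_nonpos_right hsq P.l₁_pos).antisymm (sq_nonneg _)))

theorem snd_eq_one_of_fst_eq_zero {J : Set (ℝ × ℝ)} (hJc : IsCompact J)
    (hJ : J ⊆ P.f₁ '' J ∪ P.f₂ '' J) {y : ℝ × ℝ} (hy : y ∈ J) (hy₁ : y.1 = 0) : y.2 = 1 := by
  have hsq := P.subset_square hJc hJ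
  have hK : IsCompact (J ∩ {p | p.1 = 0}) :=
    hJc.inter_right (isClosed_eq continuous_fst continuous_const)
  have := hK.nonpos_of_exists_gt (φ := fun p => 1 - p.2) (by fun_prop) ?_ ⟨hy, hy₁⟩
  · linarith [(hsq hy).2.2]
  rintro _ ⟨hy, hy₁⟩ hpos
  rcases hJ hy with ⟨w, hw, rfl⟩ | ⟨w, hw, rfl⟩
  · exact absurd hy₁ (P.n₂_pos.trans_le (P.mapsTo_f₁ (hsq hw)).1.1).ne'
  · have hw₁ : w.1 = 0 := (mul_eq_zero.1 (hy₁ : P.n₂ * w.1 = 0)).resolve_left P.n₂_pos.ne'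
    refine ⟨w, ⟨hw, hw₁⟩, lt_of_le_mul_of_lt_one hpos P.l₂_pos.le P.l₂_lt_one (le_of_eq ?_)⟩
    simp only [f₂, hw₁]; ring

theorem snd_eq_zero_of_fst_eq_one {J : Set (ℝ × ℝ)} (hJc : IsCompact J)
    (hJ : J ⊆ P.f₁ '' J ∪ P.f₂ '' J) {y : ℝ × ℝ} (hy : y ∈ J) (hy₁ : y.1 = 1) : y.2 = 0 := by
  have hsq := P.subset_square hJc hJ
  have hK : IsCompact (J ∩ {p | p.1 = 1}) :=
    hJc.inter_right (isClosed_eq continuous_fst continuous_const)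
  have := hK.nonpos_of_exists_gt (φ := fun p => p.2) (by fun_prop) ?_ ⟨hy, hy₁⟩
  · linarith [(hsq hy).2.1]
  rintro _ ⟨hy, hy₁⟩ hpos
  rcases hJ hy with ⟨w, hw, rfl⟩ | ⟨w, hw, rfl⟩
  · have hw₁ := P.fst_eq_one_of_f₁_fst_eq_one (hsq hw) hy₁
    exact ⟨w, ⟨hw, hw₁⟩, lt_of_le_mul_of_lt_one hpos P.n₁_pos.le
      (P.n₁_le_l₁.trans_lt P.l₁_lt_one) le_rfl⟩
  · exact absurd hy₁ ((P.mapsTo_f₂ (hsq hw)).1.2.trans_lt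
      (P.n₂_le_l₂.trans_lt P.l₂_lt_one)).ne

theorem f₁_eq_f₂_of_fst_eq {J : Set (ℝ × ℝ)} (hJc : IsCompact J)
    (hJ : J ⊆ P.f₁ '' J ∪ P.f₂ '' J) {z z' : ℝ × ℝ} (hz : z ∈ J) (hz' : z' ∈ J)
    (h : (P.f₁ z).1 = (P.f₂ z').1) : P.f₁ z = P.f₂ z' := by
  have hsq := P.subset_square hJc hJ
  have hz₁ := P.fst_eq_zero_of_f₁_fst_le (hsq hz) (h.trans_le (P.mapsTo_f₂ (hsq hz')).1.2)
  have hz'₁ := P.fst_eq_one_of_le_f₂_fst (hsq hz') (h ▸ (P.mapsTo_f₁ (hsq hz)).1.1)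
  have hz₂ := P.snd_eq_one_of_fst_eq_zero hJc hJ hz hz₁
  have hz'₂ := P.snd_eq_zero_of_fst_eq_one hJc hJ hz' hz'₁
  refine Prod.ext h ?_
  simp only [f₁, f₂, β, hz₂, hz'₁, hz'₂]
  ring

theorem snd_eq_of_fst_eq {J : Set (ℝ × ℝ)} (hJc : IsCompact J)
    (hJ : J ⊆ P.f₁ '' J ∪ P.f₂ '' J) :
    ∀ y ∈ J, ∀ y' ∈ J, y.1 = y'.1 → y.2 = y'.2 := by
  have hcone := P.chord_mul_nonpos hJc hJ
  have hK : IsCompact (J ×ˢ J ∩ {q | q.1.1 = q.2.1}) :=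
    (hJc.prod hJc).inter_right (isClosed_eq (by fun_prop) (by fun_prop))
  have hn₁ : P.n₁ ^ 2 < 1 := pow_lt_one₀ P.n₁_pos.le (P.n₁_le_l₁.trans_lt P.l₁_lt_one) two_ne_zero
  have hl₂ : P.l₂ ^ 2 < 1 := pow_lt_one₀ P.l₂_pos.le P.l₂_lt_one two_ne_zero
  intro y hy y' hy' hyy'
  have := hK.nonpos_of_exists_gt (φ := fun q => (q.1.2 - q.2.2) ^ 2) (by fun_prop) ?_
    ⟨mk_mem_prod hy hy', hyy'⟩
  · exact sub_eq_zero.1 (pow_eq_zero_iff two_ne_zero |>.1 (this.antisymm (sq_nonneg _)))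
  rintro ⟨_, _⟩ ⟨⟨hy, hy'⟩, hfst⟩ hpos
  rcases hJ hy with ⟨z, hz, rfl⟩ | ⟨z, hz, rfl⟩ <;>
    rcases hJ hy' with ⟨z', hz', rfl⟩ | ⟨z', hz', rfl⟩
  · have hzz' := P.fst_eq_of_f₁_fst_eq (hcone z hz z' hz') hfst
    refine ⟨(z, z'), ⟨mk_mem_prod hz hz', hzz'⟩,
      lt_of_le_mul_of_lt_one hpos (sq_nonneg _) hn₁ (le_of_eq ?_)⟩
    simp only [f₁]; ring
  · exact absurd hpos (by simp [P.f₁_eq_f₂_of_fst_eq hJc hJ hz hz' hfst])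
  · exact absurd hpos (by simp [P.f₁_eq_f₂_of_fst_eq hJc hJ hz' hz hfst.symm])
  · have hzz' : z.1 = z'.1 := mul_left_cancel₀ P.n₂_pos.ne' hfst
    refine ⟨(z, z'), ⟨mk_mem_prod hz hz', hzz'⟩,
      lt_of_le_mul_of_lt_one hpos (sq_nonneg _) hl₂ (le_of_eq ?_)⟩
    simp only [f₂, hzz']; ring

end TriangularIFS

theorem stmt_6_general (l1 l2 n1 n2 a b : ℝ)
    (h1 : 0 < n1) (h1' : n1 ≤ l1) (h1'' : l1 < 1)
    (h2 : 0 < n2) (h2' : n2 ≤ l2) (h2'' : l2 < 1)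
    (ha : a = n2 + l1 - 1) (hb : b = n1 + l2 - 1)
    (ha' : l1 + n2 ≤ 1) (hb' : l2 + n1 ≤ 1)
    (f1 f2 : ℝ × ℝ → ℝ × ℝ)
    (hf1 : ∀ p, f1 p = (l1 * p.1 + a * p.2 + (1 - l1), n1 * p.2))
    (hf2 : ∀ p, f2 p = (n2 * p.1, b * p.1 + l2 * p.2 + (1 - l2)))
    (J : Set (ℝ × ℝ)) (hJc : IsCompact J)
    (hJ : J = f1 '' J ∪ f2 '' J) :
    (∀ y ∈ J, ∀ y' ∈ J, (y.1 - y'.1) * (y.2 - y'.2) ≤ 0) ∧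
    ∃ ψ : ℝ → ℝ, Antitone ψ ∧ J = (fun x => (x, ψ x)) '' (Prod.fst '' J) := by
  subst ha hb
  let P : TriangularIFS := ⟨l1, l2, n1, n2, h1, h1', h1'', h2, h2', h2'', ha', hb'⟩
  obtain rfl : f1 = P.f₁ := funext hf1
  obtain rfl : f2 = P.f₂ := funext hf2
  have hcone := P.chord_mul_nonpos hJc hJ.subset
  exact ⟨hcone, exists_antitone_graph_eq hJc hcone (P.snd_eq_of_fst_eq hJc hJ.subset)⟩

/-- Proposition 9 (first part): if moreover `λ₁ + ν₂ ≤ 1` and `λ₂ + ν₁ ≤ 1`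
(i.e. `α ≤ 0` and `β ≤ 0`), then every chord `y − y'` between points of the
attractor `J` lies in the cone `W = {(w₁,w₂) : w₁ w₂ ≤ 0}`, and consequently `J`
is the graph of a decreasing function `x₂ = ψ(x₁)`. -/
theorem stmt_6 (l1 l2 n1 n2 a b : ℝ)
    (h1 : 0 < n1) (h1' : n1 ≤ l1) (h1'' : l1 < 1)
    (h2 : 0 < n2) (h2' : n2 ≤ l2) (h2'' : l2 < 1)
    (hsum : n1 + n2 < 1) (ha : a = n2 + l1 - 1) (hb : b = n1 + l2 - 1)
    (ha' : l1 + n2 ≤ 1) (hb' : l2 + n1 ≤ 1)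
    (f1 f2 : ℝ × ℝ → ℝ × ℝ)
    (hf1 : ∀ p, f1 p = (l1 * p.1 + a * p.2 + (1 - l1), n1 * p.2))
    (hf2 : ∀ p, f2 p = (n2 * p.1, b * p.1 + l2 * p.2 + (1 - l2)))
    (J : Set (ℝ × ℝ)) (hJne : J.Nonempty) (hJc : IsCompact J)
    (hJ : J = f1 '' J ∪ f2 '' J) :
    (∀ y ∈ J, ∀ y' ∈ J, (y.1 - y'.1) * (y.2 - y'.2) ≤ 0) ∧
    ∃ ψ : ℝ → ℝ, Antitone ψ ∧ J = (fun x => (x, ψ x)) '' (Prod.fst '' J) :=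
  stmt_6_general l1 l2 n1 n2 a b h1 h1' h1'' h2 h2' h2'' ha hb ha' hb' f1 f2 hf1 hf2 J hJc hJ
end

section
/- Under assumptions 0 < ν₁ ≤ λ₁ < 1, ν₁ + ν₂ < 1, α = ν₂ + λ₁ − 1, the angle β_k at the vertex e₁ = (1,0) of the triangle f₁ᵏ(T) converges to 0 as k → ∞; explicitly, tan β_k = ν₁ᵏ/(λ₁ᵏ − α_k) → 0, where α_k is the (1,2)-entry of M₁ᵏ. Consequently the self-affine curve J has the horizontal axis as one-sided tangent at e₁. -/
/-!
The entry `α_k` of `M₁ᵏ` equals `α k ν₁ᵏ⁻¹` when `λ₁ = ν₁` (then `α < 0`) and `γ (λ₁ᵏ - ν₁ᵏ)`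
with `γ = α / (λ₁ - ν₁) < 1` when `λ₁ > ν₁`. In both cases `λ₁ᵏ - α_k ≥ m λ₁ᵏ` for some `m > 0`,
and `ν₁ᵏ / (λ₁ᵏ - α_k)` is `ν₁ / (ν₁ - α k)`, resp. at most `(ν₁ / λ₁)ᵏ / m`, so it tends to `0`.

Both maps send `T` into itself and contract the `ℓ¹` distance, so `J ⊆ T`. Unwinding
`J = f₁(J) ∪ f₂(J)` `K` times, a point of `J` lies either in `f₁ᴷ(T)`, whose points `p` satisfy
`p₂ ≤ tan β_K · (1 - p₁)`, or in some `f₁ʲ(f₂(T))` with `j < K`, which stays at horizontal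
distance at least `m λ₁ᴷ (1 - ν₂)` from `e₁`.
-/

open Filter Set Topology

noncomputable def upperPowEntry (l n a : ℝ) : ℕ → ℝ
  | 0 => 0
  | k + 1 => l * upperPowEntry l n a k + a * n ^ k

def stdTriangle : Set (ℝ × ℝ) := {p | 0 ≤ p.1 ∧ 0 ≤ p.2 ∧ p.1 + p.2 ≤ 1}

def taxicab (p q : ℝ × ℝ) : ℝ := |p.1 - q.1| + |p.2 - q.2|

theorem upperTriangular_pow (l n a : ℝ) (k : ℕ) :
    (!![l, a; 0, n] : Matrix (Fin 2) (Fin 2) ℝ) ^ k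
      = !![l ^ k, upperPowEntry l n a k; 0, n ^ k] := by
  induction k with
  | zero => simp [upperPowEntry, Matrix.one_fin_two]
  | succ k ih => rw [pow_succ', ih, Matrix.mul_fin_two]; simp [upperPowEntry, pow_succ']

theorem mul_upperPowEntry_self (n a : ℝ) (k : ℕ) :
    n * upperPowEntry n n a k = a * k * n ^ k := by
  induction k with
  | zero => simp [upperPowEntry]
  | succ k ih =>
    simp only [upperPowEntry]
    push_cast
    linear_combination n * ih

theorem upperPowEntry_of_ne {l n : ℝ} (a : ℝ) (h : l ≠ n) (k : ℕ) :
    upperPowEntry l n a k = a / (l - n) * (l ^ k - n ^ k) := by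
  have hln : l - n ≠ 0 := sub_ne_zero.mpr h
  induction k with
  | zero => simp [upperPowEntry]
  | succ k ih =>
    rw [upperPowEntry, ih]
    field_simp
    ring

section

variable {l n a : ℝ}

theorem exists_pos_mul_pow_le_sub_upperPowEntry (hn : 0 < n) (hnl : n ≤ l) (ha : a < l - n) :
    ∃ m, 0 < m ∧ m ≤ 1 ∧ ∀ k : ℕ, m * l ^ k ≤ l ^ k - upperPowEntry l n a k := by
  obtain rfl | hlt := hnl.eq_or_lt
  · refine ⟨1, one_pos, le_rfl, fun k => ?_⟩
    have hk := mul_upperPowEntry_self n a k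
    have : a * k * n ^ k ≤ 0 :=
      mul_nonpos_of_nonpos_of_nonneg (mul_nonpos_of_nonpos_of_nonneg (by linarith) k.cast_nonneg)
        (pow_nonneg hn.le k)
    nlinarith
  · set γ := a / (l - n) with hγ
    have hγ1 : γ < 1 := by rw [hγ, div_lt_one (by linarith)]; exact ha
    refine ⟨min 1 (1 - γ), lt_min one_pos (by linarith), min_le_left _ _, fun k => ?_⟩
    rw [upperPowEntry_of_ne a hlt.ne']
    have hnk : n ^ k ≤ l ^ k := pow_le_pow_left₀ hn.le hnl k
    have hn0 : 0 ≤ n ^ k := pow_nonneg hn.le k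
    rcases le_or_gt γ 0 with hγ0 | hγ0
    · nlinarith [min_le_left 1 (1 - γ), mul_nonpos_of_nonpos_of_nonneg hγ0 (sub_nonneg.2 hnk)]
    · nlinarith [min_le_right 1 (1 - γ), mul_nonneg hγ0.le hn0]

theorem tendsto_pow_div_sub_upperPowEntry (hn : 0 < n) (hnl : n ≤ l) (ha : a < l - n) :
    Tendsto (fun k : ℕ => n ^ k / (l ^ k - upperPowEntry l n a k)) atTop (𝓝 0) := by
  obtain ⟨m, hm0, -, hmD⟩ := exists_pos_mul_pow_le_sub_upperPowEntry hn hnl ha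
  have hD : ∀ k : ℕ, 0 < l ^ k - upperPowEntry l n a k := fun k =>
    (mul_pos hm0 (pow_pos (hn.trans_le hnl) k)).trans_le (hmD k)
  obtain rfl | hlt := hnl.eq_or_lt
  · have hlin : Tendsto (fun k : ℕ => n + -a * k) atTop atTop :=
      tendsto_atTop_add_const_left _ _
        (tendsto_natCast_atTop_atTop.const_mul_atTop (by linarith))
    refine ((tendsto_const_nhds (x := n)).div_atTop hlin).congr fun k => ?_
    have hlin_pos : 0 < n + -a * k := by nlinarith [k.cast_nonneg (α := ℝ)]
    rw [div_eq_div_iff hlin_pos.ne' (hD k).ne']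
    linear_combination -mul_upperPowEntry_self n a k
  · have hl : 0 < l := hn.trans hlt
    refine squeeze_zero (fun k => (div_pos (pow_pos hn k) (hD k)).le) (fun k => ?_)
      (by simpa using (tendsto_pow_atTop_nhds_zero_of_lt_one (div_pos hn hl).le
        ((div_lt_one hl).2 hlt)).div_const m)
    calc n ^ k / (l ^ k - upperPowEntry l n a k) ≤ n ^ k / (m * l ^ k) :=
          div_le_div_of_nonneg_left (pow_nonneg hn.le k) (mul_pos hm0 (pow_pos hl k)) (hmD k)
      _ = (n / l) ^ k / m := by rw [div_pow]; field_simp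

end

section

variable {l n a : ℝ} {f : ℝ × ℝ → ℝ × ℝ}

theorem iterate_apply_of_upper (hf : ∀ p, f p = (l * p.1 + a * p.2 + (1 - l), n * p.2))
    (j : ℕ) (q : ℝ × ℝ) :
    f^[j] q = (l ^ j * (q.1 - 1) + upperPowEntry l n a j * q.2 + 1, n ^ j * q.2) := by
  induction j with
  | zero => simp [upperPowEntry]
  | succ j ih =>
    rw [Function.iterate_succ_apply', ih, hf, upperPowEntry, pow_succ, pow_succ]
    ext <;> ring

theorem sub_upperPowEntry_mul_snd_iterate_le
    (hf : ∀ p, f p = (l * p.1 + a * p.2 + (1 - l), n * p.2)) (hl : 0 ≤ l) (hn : 0 ≤ n)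
    (K : ℕ) {q : ℝ × ℝ} (hq : q ∈ stdTriangle) :
    (l ^ K - upperPowEntry l n a K) * (f^[K] q).2 ≤ n ^ K * (1 - (f^[K] q).1) := by
  obtain ⟨-, -, hq⟩ := hq
  rw [iterate_apply_of_upper hf]
  nlinarith [mul_nonneg (mul_nonneg (pow_nonneg hn K) (pow_nonneg hl K)) (sub_nonneg.2 hq)]

theorem mul_pow_mul_le_one_sub_fst_iterate
    (hf : ∀ p, f p = (l * p.1 + a * p.2 + (1 - l), n * p.2)) (hl : 0 ≤ l) {m : ℝ} (hm : m ≤ 1)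
    {j : ℕ} (hmD : m * l ^ j ≤ l ^ j - upperPowEntry l n a j) {t : ℝ × ℝ}
    (ht : t ∈ stdTriangle) :
    m * l ^ j * (1 - t.1) ≤ 1 - (f^[j] t).1 := by
  obtain ⟨-, ht2, ht⟩ := ht
  rw [iterate_apply_of_upper hf]
  have hlj : 0 ≤ (1 - m) * l ^ j * (1 - t.1) :=
    mul_nonneg (mul_nonneg (by linarith) (pow_nonneg hl j)) (by linarith)
  rcases le_or_gt (upperPowEntry l n a j) 0 with hA | hA
  · nlinarith [mul_nonpos_of_nonpos_of_nonneg hA ht2]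
  · nlinarith [mul_le_mul_of_nonneg_left (show t.2 ≤ 1 - t.1 by linarith) hA.le,
      mul_le_mul_of_nonneg_right hmD (show 0 ≤ 1 - t.1 by linarith)]

end

section

variable {l n a b : ℝ} {f g : ℝ × ℝ → ℝ × ℝ}

theorem isClosed_stdTriangle : IsClosed stdTriangle :=
  (isClosed_le continuous_const continuous_fst).inter ((isClosed_le continuous_const
    continuous_snd).inter (isClosed_le (continuous_fst.add continuous_snd) continuous_const))

theorem mapsTo_stdTriangle_of_upper (hf : ∀ p, f p = (l * p.1 + a * p.2 + (1 - l), n * p.2))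
    (hn : 0 ≤ n) (hl : 0 ≤ l) (hl1 : l ≤ 1) (ha : l - 1 ≤ a) (ha' : a ≤ l - n) :
    MapsTo f stdTriangle stdTriangle := by
  rintro t ⟨ht1, ht2, ht3⟩
  rw [hf]
  refine ⟨?_, mul_nonneg hn ht2, ?_⟩ <;> dsimp only <;> nlinarith [mul_nonneg ht1 ht2]

theorem mapsTo_stdTriangle_of_lower (hg : ∀ p, g p = (n * p.1, b * p.1 + l * p.2 + (1 - l)))
    (hn : 0 ≤ n) (hl : 0 ≤ l) (hl1 : l ≤ 1) (hb : l - 1 ≤ b) (hb' : b ≤ l - n) :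
    MapsTo g stdTriangle stdTriangle := by
  rintro t ⟨ht1, ht2, ht3⟩
  rw [hg]
  refine ⟨mul_nonneg hn ht1, ?_, ?_⟩ <;> dsimp only <;> nlinarith [mul_nonneg ht1 ht2]

theorem taxicab_upper_le (hf : ∀ p, f p = (l * p.1 + a * p.2 + (1 - l), n * p.2))
    (hl : 0 ≤ l) (hn : 0 ≤ n) {θ : ℝ} (hlθ : l ≤ θ) (haθ : |a| + n ≤ θ) (p q : ℝ × ℝ) :
    taxicab (f p) (f q) ≤ θ * taxicab p q := by
  have e1 : (f p).1 - (f q).1 = l * (p.1 - q.1) + a * (p.2 - q.2) := by rw [hf, hf]; ring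
  have e2 : (f p).2 - (f q).2 = n * (p.2 - q.2) := by rw [hf, hf]; ring
  have hX := abs_nonneg (p.1 - q.1)
  have hY := abs_nonneg (p.2 - q.2)
  calc taxicab (f p) (f q) ≤ l * |p.1 - q.1| + (|a| + n) * |p.2 - q.2| := by
        rw [taxicab, e1, e2, abs_mul n, abs_of_nonneg hn]
        nlinarith [abs_add_le (l * (p.1 - q.1)) (a * (p.2 - q.2)), abs_mul l (p.1 - q.1),
          abs_mul a (p.2 - q.2), abs_of_nonneg hl]
    _ ≤ θ * taxicab p q := by rw [taxicab]; nlinarith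

theorem taxicab_lower_le (hg : ∀ p, g p = (n * p.1, b * p.1 + l * p.2 + (1 - l)))
    (hl : 0 ≤ l) (hn : 0 ≤ n) {θ : ℝ} (hlθ : l ≤ θ) (hbθ : n + |b| ≤ θ) (p q : ℝ × ℝ) :
    taxicab (g p) (g q) ≤ θ * taxicab p q := by
  have e1 : (g p).1 - (g q).1 = n * (p.1 - q.1) := by rw [hg, hg]; ring
  have e2 : (g p).2 - (g q).2 = b * (p.1 - q.1) + l * (p.2 - q.2) := by rw [hg, hg]; ring
  have hX := abs_nonneg (p.1 - q.1)
  have hY := abs_nonneg (p.2 - q.2)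
  calc taxicab (g p) (g q) ≤ (n + |b|) * |p.1 - q.1| + l * |p.2 - q.2| := by
        rw [taxicab, e1, e2, abs_mul n, abs_of_nonneg hn]
        nlinarith [abs_add_le (b * (p.1 - q.1)) (l * (p.2 - q.2)), abs_mul l (p.2 - q.2),
          abs_mul b (p.1 - q.1), abs_of_nonneg hl]
    _ ≤ θ * taxicab p q := by rw [taxicab]; nlinarith

end

theorem dist_le_taxicab (p q : ℝ × ℝ) : dist p q ≤ taxicab p q := by
  rw [Prod.dist_eq, Real.dist_eq, Real.dist_eq, taxicab]
  exact max_le (by linarith [abs_nonneg (p.2 - q.2)]) (by linarith [abs_nonneg (p.1 - q.1)])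

theorem subset_of_contracting {X : Type*} [PseudoMetricSpace X] {J T : Set X} {S : Set (X → X)}
    {d : X → X → ℝ} {θ B : ℝ} (hJ : J ⊆ ⋃ f ∈ S, f '' J) (hT : IsClosed T)
    (hST : ∀ f ∈ S, MapsTo f T T) (hd : ∀ f ∈ S, ∀ p q, d (f p) (f q) ≤ θ * d p q)
    (hθ0 : 0 ≤ θ) (hθ1 : θ < 1) (hdist : ∀ p q, dist p q ≤ d p q)
    (hB : ∀ p ∈ J, ∃ t ∈ T, d p t ≤ B) : J ⊆ T := by
  have approx : ∀ k : ℕ, ∀ p ∈ J, ∃ t ∈ T, d p t ≤ θ ^ k * B := by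
    intro k
    induction k with
    | zero => simpa using hB
    | succ k ih =>
      intro p hp
      obtain ⟨f, hf, q, hq, rfl⟩ : ∃ f ∈ S, ∃ q ∈ J, f q = p := by simpa using hJ hp
      obtain ⟨t, ht, hqt⟩ := ih q hq
      refine ⟨f t, hST f hf ht, ?_⟩
      calc d (f q) (f t) ≤ θ * d q t := hd f hf q t
        _ ≤ θ ^ (k + 1) * B := by rw [pow_succ', mul_assoc]; gcongr
  intro p hp
  rw [← hT.closure_eq, Metric.mem_closure_iff]
  intro ε hε
  have hlim : Tendsto (fun k : ℕ => θ ^ k * B) atTop (𝓝 0) := by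
    simpa using (tendsto_pow_atTop_nhds_zero_of_lt_one hθ0 hθ1).mul_const B
  obtain ⟨k, hk⟩ := (hlim.eventually (gt_mem_nhds hε)).exists
  obtain ⟨t, ht, hpt⟩ := approx k p hp
  exact ⟨t, ht, ((hdist p t).trans hpt).trans_lt hk⟩

theorem subset_stdTriangle {l1 l2 n1 n2 a b : ℝ}
    (h1 : 0 < n1) (h1' : n1 ≤ l1) (h1'' : l1 < 1)
    (h2 : 0 < n2) (h2' : n2 ≤ l2) (h2'' : l2 < 1)
    (hsum : n1 + n2 < 1) (ha : a = n2 + l1 - 1) (hb : b = n1 + l2 - 1)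
    {f1 f2 : ℝ × ℝ → ℝ × ℝ}
    (hf1 : ∀ p, f1 p = (l1 * p.1 + a * p.2 + (1 - l1), n1 * p.2))
    (hf2 : ∀ p, f2 p = (n2 * p.1, b * p.1 + l2 * p.2 + (1 - l2)))
    {J : Set (ℝ × ℝ)} (hJc : IsCompact J) (hJ : J ⊆ f1 '' J ∪ f2 '' J) :
    J ⊆ stdTriangle := by
  have ha1 : |a| + n1 < 1 := by linarith [abs_lt.2 (show -(1 - n1) < a ∧ a < 1 - n1 by
    constructor <;> linarith)]
  have hb1 : n2 + |b| < 1 := by linarith [abs_lt.2 (show -(1 - n2) < b ∧ b < 1 - n2 by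
    constructor <;> linarith)]
  obtain ⟨C, hC⟩ := hJc.isBounded.exists_norm_le
  refine subset_of_contracting (S := {f1, f2}) (d := taxicab) (B := 2 * C)
    (θ := max (max l1 l2) (max (|a| + n1) (n2 + |b|))) (by simpa using hJ) isClosed_stdTriangle
    ?_ ?_ (by positivity) (max_lt (max_lt h1'' h2'') (max_lt ha1 hb1)) dist_le_taxicab
    fun p hp => ⟨0, ?_, ?_⟩
  · simp only [mem_insert_iff, mem_singleton_iff, forall_eq_or_imp, forall_eq]
    exact ⟨mapsTo_stdTriangle_of_upper hf1 h1.le (by linarith) (by linarith) (by linarith)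
      (by linarith), mapsTo_stdTriangle_of_lower hf2 h2.le (by linarith) (by linarith)
      (by linarith) (by linarith)⟩
  · simp only [mem_insert_iff, mem_singleton_iff, forall_eq_or_imp, forall_eq]
    exact ⟨taxicab_upper_le hf1 (by linarith) h1.le (by simp) (by simp),
      taxicab_lower_le hf2 (by linarith) h2.le (by simp) (by simp)⟩
  · exact ⟨le_rfl, le_rfl, by norm_num⟩
  · have h1C := (norm_fst_le p).trans (hC p hp)
    have h2C := (norm_snd_le p).trans (hC p hp)
    simp only [taxicab, Prod.fst_zero, Prod.snd_zero, sub_zero]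
    rw [Real.norm_eq_abs] at h1C h2C
    linarith

theorem exists_eq_iterate_or_eq_iterate_comp {X : Type*} {f g : X → X} {J : Set X}
    (hJ : J ⊆ f '' J ∪ g '' J) (K : ℕ) {p : X} (hp : p ∈ J) :
    (∃ q ∈ J, p = f^[K] q) ∨ ∃ j < K, ∃ q ∈ J, p = f^[j] (g q) := by
  induction K generalizing p with
  | zero => exact Or.inl ⟨p, hp, rfl⟩
  | succ K ih =>
    rcases hJ hp with ⟨q, hq, rfl⟩ | ⟨q, hq, rfl⟩
    · rcases ih hq with ⟨r, hr, rfl⟩ | ⟨j, hj, r, hr, rfl⟩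
      · exact Or.inl ⟨r, hr, (Function.iterate_succ_apply' f K r).symm⟩
      · exact Or.inr ⟨j + 1, by omega, r, hr, (Function.iterate_succ_apply' f j _).symm⟩
    · exact Or.inr ⟨0, K.succ_pos, q, hq, rfl⟩

theorem stmt_10_general (l1 l2 n1 n2 a b : ℝ)
    (h1 : 0 < n1) (h1' : n1 ≤ l1) (h1'' : l1 < 1)
    (h2 : 0 < n2) (h2' : n2 ≤ l2) (h2'' : l2 < 1)
    (hsum : n1 + n2 < 1) (ha : a = n2 + l1 - 1) (hb : b = n1 + l2 - 1)
    (M : Matrix (Fin 2) (Fin 2) ℝ) (hM : M = !![l1, a; 0, n1])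
    (f1 f2 : ℝ × ℝ → ℝ × ℝ)
    (hf1 : ∀ p, f1 p = (l1 * p.1 + a * p.2 + (1 - l1), n1 * p.2))
    (hf2 : ∀ p, f2 p = (n2 * p.1, b * p.1 + l2 * p.2 + (1 - l2)))
    (J : Set (ℝ × ℝ)) (hJc : IsCompact J)
    (hJ : J = f1 '' J ∪ f2 '' J) :
    Filter.Tendsto (fun k : ℕ => n1 ^ k / (l1 ^ k - (M ^ k) 0 1))
      Filter.atTop (nhds 0) ∧
    ∀ δ > (0 : ℝ), ∃ ε > (0 : ℝ), ∀ p ∈ J,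
      0 < Real.sqrt ((p.1 - 1) ^ 2 + p.2 ^ 2) →
      Real.sqrt ((p.1 - 1) ^ 2 + p.2 ^ 2) < ε →
      |p.2| ≤ δ * Real.sqrt ((p.1 - 1) ^ 2 + p.2 ^ 2) := by
  have hl1 : 0 < l1 := h1.trans_le h1'
  have ha' : a < l1 - n1 := by linarith
  have hMk : ∀ k : ℕ, (M ^ k) 0 1 = upperPowEntry l1 n1 a k := fun k => by
    simp [hM, upperTriangular_pow]
  have htan := tendsto_pow_div_sub_upperPowEntry h1 h1' ha'
  refine ⟨by simpa only [hMk] using htan, fun δ hδ => ?_⟩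
  obtain ⟨m, hm0, hm1, hmD⟩ := exists_pos_mul_pow_le_sub_upperPowEntry h1 h1' ha'
  obtain ⟨K, hK⟩ := (htan.eventually (gt_mem_nhds hδ)).exists
  have hJT := subset_stdTriangle h1 h1' h1'' h2 h2' h2'' hsum ha hb hf1 hf2 hJc hJ.subset
  refine ⟨m * l1 ^ K * (1 - n2), mul_pos (mul_pos hm0 (pow_pos hl1 K)) (by linarith),
    fun p hp _ hpε => ?_⟩
  have hdist : 1 - p.1 ≤ √((p.1 - 1) ^ 2 + p.2 ^ 2) :=
    (le_abs_self _).trans (Real.abs_le_sqrt (by nlinarith [sq_nonneg p.2]))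
  rcases exists_eq_iterate_or_eq_iterate_comp hJ.subset K hp with
    ⟨q, hq, rfl⟩ | ⟨j, hj, q, hq, rfl⟩
  · have hD : 0 < l1 ^ K - upperPowEntry l1 n1 a K :=
      (mul_pos hm0 (pow_pos hl1 K)).trans_le (hmD K)
    have hcone := sub_upperPowEntry_mul_snd_iterate_le hf1 hl1.le h1.le K (hJT hq)
    obtain ⟨-, hp2, hp⟩ := hJT hp
    have hslope := mul_le_mul_of_nonneg_right ((div_lt_iff₀ hD).1 hK).le
      (show 0 ≤ 1 - (f1^[K] q).1 by linarith)
    rw [abs_of_nonneg hp2]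
    calc (f1^[K] q).2 ≤ δ * (1 - (f1^[K] q).1) :=
          le_of_mul_le_mul_left (by linarith) hD
      _ ≤ δ * √(((f1^[K] q).1 - 1) ^ 2 + (f1^[K] q).2 ^ 2) := by gcongr
  · have hf2q : f2 q ∈ J := hJ ▸ Or.inr (mem_image_of_mem f2 hq)
    have hf2q1 : (f2 q).1 ≤ n2 := by
      rw [hf2]
      nlinarith [(hJT hq).1, (hJT hq).2.1, (hJT hq).2.2]
    have hKj : l1 ^ K ≤ l1 ^ j := pow_le_pow_of_le_one hl1.le h1''.le hj.le
    have hfar := mul_pow_mul_le_one_sub_fst_iterate hf1 hl1.le hm1 (hmD j) (hJT hf2q)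
    have : m * l1 ^ K * (1 - n2) ≤ m * l1 ^ j * (1 - (f2 q).1) := by
      gcongr
      linarith
    linarith

/-- Proposition 11: the angle `β_k` of the triangle `f₁^k(T)` at the vertex
`e₁ = (1,0)`, with `tan β_k = ν₁^k/(λ₁^k − α_k)` where `α_k` is the (1,2)-entry of
`M₁^k`, tends to `0`; consequently the self-affine curve `J` has the horizontal
axis as one-sided tangent at `e₁`: for every `δ > 0` there is `ε > 0` such that
every point `p ∈ J` with `0 < |p − e₁| < ε` satisfies `|p₂| ≤ δ·|p − e₁|`. -/
theorem stmt_10 (l1 l2 n1 n2 a b : ℝ)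
    (h1 : 0 < n1) (h1' : n1 ≤ l1) (h1'' : l1 < 1)
    (h2 : 0 < n2) (h2' : n2 ≤ l2) (h2'' : l2 < 1)
    (hsum : n1 + n2 < 1) (ha : a = n2 + l1 - 1) (hb : b = n1 + l2 - 1)
    (M : Matrix (Fin 2) (Fin 2) ℝ) (hM : M = !![l1, a; 0, n1])
    (f1 f2 : ℝ × ℝ → ℝ × ℝ)
    (hf1 : ∀ p, f1 p = (l1 * p.1 + a * p.2 + (1 - l1), n1 * p.2))
    (hf2 : ∀ p, f2 p = (n2 * p.1, b * p.1 + l2 * p.2 + (1 - l2)))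
    (J : Set (ℝ × ℝ)) (hJne : J.Nonempty) (hJc : IsCompact J)
    (hJ : J = f1 '' J ∪ f2 '' J) :
    Filter.Tendsto (fun k : ℕ => n1 ^ k / (l1 ^ k - (M ^ k) 0 1))
      Filter.atTop (nhds 0) ∧
    ∀ δ > (0 : ℝ), ∃ ε > (0 : ℝ), ∀ p ∈ J,
      0 < Real.sqrt ((p.1 - 1) ^ 2 + p.2 ^ 2) →
      Real.sqrt ((p.1 - 1) ^ 2 + p.2 ^ 2) < ε →
      |p.2| ≤ δ * Real.sqrt ((p.1 - 1) ^ 2 + p.2 ^ 2) :=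
  stmt_10_general l1 l2 n1 n2 a b h1 h1' h1'' h2 h2' h2'' hsum ha hb M hM f1 f2 hf1 hf2 J hJc hJ
end

section
/- If α = λ₁+ν₂−1 < 0 and β = λ₂+ν₁−1 < 0, then for the matrices M₁ = [[λ₁,α],[0,ν₁]] and M₂ = [[ν₂,0],[β,λ₂]], the cone V = M₁M₂(W) is contained in the interior of W (except the origin), where W = {(w₁,w₂) : w₁w₂ ≤ 0}. -/
/-!
Write `p = (x, y)` and `u = b x + l₂ y` for the second coordinate of `M₂ p`. Since `b < 0` and
`l₂ > 0`, `x u = b x² + l₂ x y ≤ 0`, and `u = 0` would force `x = 0` and then `y = 0`; so `M₂`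
maps `W \ {0}` into `W` with nonzero second coordinate. For such a point `(X, u)`,
`(l₁ X + a u) u = l₁ X u + a u² < 0` because `a < 0`, so `M₁` lands in the interior of `W`.
-/

theorem mul_mul_add_mul_nonpos {b l x y : ℝ} (hb : b ≤ 0) (hl : 0 ≤ l) (hxy : x * y ≤ 0) :
    x * (b * x + l * y) ≤ 0 := by
  nlinarith [mul_nonpos_of_nonpos_of_nonneg hb (sq_nonneg x), mul_nonpos_of_nonneg_of_nonpos hl hxy]

theorem mul_add_mul_ne_zero {b l x y : ℝ} (hb : b < 0) (hl : 0 < l) (hxy : x * y ≤ 0)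
    (hxy₀ : (x, y) ≠ 0) : b * x + l * y ≠ 0 := by
  intro hu
  have hxu : x * (b * x + l * y) = 0 := by rw [hu, mul_zero]
  have hbx : b * x ^ 2 = 0 := by
    nlinarith [mul_nonpos_of_nonpos_of_nonneg hb.le (sq_nonneg x),
      mul_nonpos_of_nonneg_of_nonpos hl.le hxy]
  have hx : x = 0 := by simpa [hb.ne] using hbx
  have hy : y = 0 := by
    subst hx
    simpa [hl.ne'] using hu
  exact hxy₀ (by simp [hx, hy])

theorem add_mul_mul_neg {l a X u : ℝ} (hl : 0 ≤ l) (ha : a < 0) (hXu : X * u ≤ 0) (hu : u ≠ 0) :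
    (l * X + a * u) * u < 0 := by
  nlinarith [mul_neg_of_neg_of_pos ha (sq_pos_of_ne_zero hu), mul_nonpos_of_nonneg_of_nonpos hl hXu]

theorem stmt_11_general (l1 l2 n1 n2 a b : ℝ)
    (h1 : 0 < n1) (h1' : n1 ≤ l1)
    (h2 : 0 < n2) (h2' : n2 ≤ l2)
    (ha' : a < 0)
    (hb' : b < 0)
    (M1 M2 : ℝ × ℝ → ℝ × ℝ)
    (hM1 : ∀ p, M1 p = (l1 * p.1 + a * p.2, n1 * p.2))
    (hM2 : ∀ p, M2 p = (n2 * p.1, b * p.1 + l2 * p.2)) :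
    ∀ p : ℝ × ℝ, p.1 * p.2 ≤ 0 → p ≠ 0 →
      (M1 (M2 p)).1 * (M1 (M2 p)).2 < 0 := by
  rintro ⟨x, y⟩ hxy hxy₀
  have hl2 : 0 < l2 := h2.trans_le h2'
  have hu := mul_add_mul_ne_zero hb' hl2 hxy hxy₀
  have hXu : n2 * x * (b * x + l2 * y) ≤ 0 := by
    rw [mul_assoc]
    exact mul_nonpos_of_nonneg_of_nonpos h2.le (mul_mul_add_mul_nonpos hb'.le hl2.le hxy)
  have hneg := add_mul_mul_neg (h1.le.trans h1') ha' hXu hu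
  simp only [hM1, hM2]
  linarith [mul_neg_of_pos_of_neg h1 hneg]

/-- If `α < 0` and `β < 0`, the cone `V = M₁M₂(W)` is contained in the interior of
`W` except for the origin: every nonzero `p` in `W = {w₁w₂ ≤ 0}` is mapped by
`M₁M₂ = [[λ₁ν₂ + αβ, αλ₂],[ν₁β, ν₁λ₂]]` to a point with strictly negative
coordinate product. -/
theorem stmt_11 (l1 l2 n1 n2 a b : ℝ)
    (h1 : 0 < n1) (h1' : n1 ≤ l1) (h1'' : l1 < 1)
    (h2 : 0 < n2) (h2' : n2 ≤ l2) (h2'' : l2 < 1)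
    (ha : a = n2 + l1 - 1) (ha' : a < 0)
    (hb : b = n1 + l2 - 1) (hb' : b < 0)
    (M1 M2 : ℝ × ℝ → ℝ × ℝ)
    (hM1 : ∀ p, M1 p = (l1 * p.1 + a * p.2, n1 * p.2))
    (hM2 : ∀ p, M2 p = (n2 * p.1, b * p.1 + l2 * p.2)) :
    ∀ p : ℝ × ℝ, p.1 * p.2 ≤ 0 → p ≠ 0 →
      (M1 (M2 p)).1 * (M1 (M2 p)).2 < 0 :=
  stmt_11_general l1 l2 n1 n2 a b h1 h1' h2 h2' ha' hb' M1 M2 hM1 hM2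
end

section
/- Let (Bₙ) be products of matrices M₁, M₂ (with α, β < 0 as above) such that between consecutive indices each product block Cₘ begins with M₁M₂. Then diam(ℓ ∩ B_m W) ≤ (1−δ)^{m−1} diam(ℓ ∩ W) for all m, and consequently the nested cones B_m W converge to a single line through the origin. -/
/-!
A product `N` of `M₁`'s and `M₂`'s maps `W` injectively into itself, so it induces a map of the
segment `ℓ ∩ W = {(t, t + 1) | t ∈ [-1, 0]}` into itself, a Möbius map in `t` whose denominator
does not vanish on `[-1, 0]`. By the definition of `δ`, the segment `ℓ ∩ M₁M₂W` lies in
`t ∈ [-1 + δ, -δ]`, and a cross-ratio estimate shows that such a Möbius map shrinks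
`[-1 + δ, -δ]` by the factor `1 - δ` relative to the image of `[-1, 0]`. As `B_{m+1}W ⊆ B_m M₁M₂W`,
induction gives the diameter bound. The nested closed sections `ℓ ∩ B_m W` then shrink to a single
point `z`, and the intersection of the cones, being invariant under scaling, is the line `ℝ z`.
-/

open Set Metric Filter Topology

def secondFourthQuadrants : Set (ℝ × ℝ) := {p | p.1 * p.2 ≤ 0}

def sectionLine : Set (ℝ × ℝ) := {p | p.2 - p.1 = 1}

def sectionParam (t : ℝ) : ℝ × ℝ := (t, t + 1)

/-- The parameter of the point where the line `ℝ • p` meets `sectionLine`; it is the junk value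
`0` when `p.2 = p.1`. -/
noncomputable def sectionCoord (p : ℝ × ℝ) : ℝ := p.1 / (p.2 - p.1)

def IsScaleInvariant (A : Set (ℝ × ℝ)) : Prop := ∀ (c : ℝ), ∀ p ∈ A, c • p ∈ A

section SectionLine

lemma isometry_sectionParam : Isometry sectionParam :=
  Isometry.of_dist_eq fun s t => by simp [sectionParam, Prod.dist_eq, Real.dist_eq]

lemma sectionParam_mem_sectionLine (t : ℝ) : sectionParam t ∈ sectionLine := by
  simp [sectionParam, sectionLine]

lemma zero_notMem_sectionLine : (0 : ℝ × ℝ) ∉ sectionLine := by simp [sectionLine]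

lemma sectionParam_ne_zero (t : ℝ) : sectionParam t ≠ 0 := fun h =>
  zero_notMem_sectionLine (h ▸ sectionParam_mem_sectionLine t)

lemma sectionParam_mem_iff {t : ℝ} :
    sectionParam t ∈ secondFourthQuadrants ↔ t ∈ Icc (-1) 0 := by
  simp only [sectionParam, secondFourthQuadrants, mem_ofPred_eq, mem_Icc]
  constructor
  · intro h; constructor <;> nlinarith
  · rintro ⟨h₁, h₂⟩; nlinarith

lemma sectionParam_sectionCoord_of_mem {p : ℝ × ℝ} (hp : p ∈ sectionLine) :
    sectionParam (sectionCoord p) = p := by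
  simp only [sectionLine, mem_ofPred_eq] at hp
  simp only [sectionParam, sectionCoord, hp, div_one]
  ext <;> simp; linarith

lemma sectionCoord_smul {c : ℝ} (hc : c ≠ 0) (p : ℝ × ℝ) :
    sectionCoord (c • p) = sectionCoord p := by
  simp only [sectionCoord, Prod.smul_fst, Prod.smul_snd, smul_eq_mul, ← mul_sub]
  exact mul_div_mul_left _ _ hc

lemma smul_sectionParam_sectionCoord {p : ℝ × ℝ} (hp : p.2 - p.1 ≠ 0) :
    (p.2 - p.1) • sectionParam (sectionCoord p) = p := by
  ext <;> simp only [sectionParam, sectionCoord, Prod.smul_fst, Prod.smul_snd, smul_eq_mul]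
  · field_simp
  · field_simp; ring

lemma sub_ne_zero_of_mem_secondFourthQuadrants {p : ℝ × ℝ} (hp : p ∈ secondFourthQuadrants)
    (h0 : p ≠ 0) : p.2 - p.1 ≠ 0 := by
  intro h
  have h₁ : p.1 = 0 := by
    simp only [secondFourthQuadrants, mem_ofPred_eq] at hp
    nlinarith [sub_eq_zero.1 h]
  exact h0 (Prod.ext h₁ (by simp; linarith))

lemma isClosed_secondFourthQuadrants : IsClosed secondFourthQuadrants :=
  isClosed_le (by fun_prop) continuous_const

lemma isClosed_sectionLine : IsClosed sectionLine :=
  isClosed_eq (by fun_prop) continuous_const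

lemma sectionLine_inter_secondFourthQuadrants :
    sectionLine ∩ secondFourthQuadrants = sectionParam '' Icc (-1) 0 := by
  ext p
  constructor
  · rintro ⟨hl, hW⟩
    refine ⟨sectionCoord p, ?_, sectionParam_sectionCoord_of_mem hl⟩
    rwa [← sectionParam_mem_iff, sectionParam_sectionCoord_of_mem hl]
  · rintro ⟨t, ht, rfl⟩
    exact ⟨sectionParam_mem_sectionLine t, sectionParam_mem_iff.2 ht⟩

lemma isBounded_sectionLine_inter :
    Bornology.IsBounded (sectionLine ∩ secondFourthQuadrants) := by
  rw [sectionLine_inter_secondFourthQuadrants]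
  exact (isCompact_Icc.image isometry_sectionParam.continuous).isBounded

lemma diam_sectionLine_inter : diam (sectionLine ∩ secondFourthQuadrants) = 1 := by
  rw [sectionLine_inter_secondFourthQuadrants, isometry_sectionParam.diam_image,
    Real.diam_Icc (by norm_num)]
  norm_num

lemma sectionParam_neg_one_mem_frontier : sectionParam (-1) ∈ frontier secondFourthQuadrants := by
  have h : (fun t : ℝ => ((-1 : ℝ), t)) ⁻¹' secondFourthQuadrants = Ici 0 := by
    ext t; simp [secondFourthQuadrants]
  have := (show Continuous fun t : ℝ => ((-1 : ℝ), t) by fun_prop).frontier_preimage_subset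
    secondFourthQuadrants (by rw [h, frontier_Ici]; rfl : (0 : ℝ) ∈ _)
  simpa [sectionParam] using this

lemma sectionParam_zero_mem_frontier : sectionParam 0 ∈ frontier secondFourthQuadrants := by
  have h : (fun t : ℝ => (t, (1 : ℝ))) ⁻¹' secondFourthQuadrants = Iic 0 := by
    ext t; simp [secondFourthQuadrants]
  have := (show Continuous fun t : ℝ => (t, (1 : ℝ)) by fun_prop).frontier_preimage_subset
    secondFourthQuadrants (by rw [h, frontier_Iic]; rfl : (0 : ℝ) ∈ _)
  simpa [sectionParam] using this

end SectionLine

section ScaleInvariant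

lemma isScaleInvariant_secondFourthQuadrants : IsScaleInvariant secondFourthQuadrants := by
  intro c p hp
  simp only [secondFourthQuadrants, mem_ofPred_eq, Prod.smul_fst, Prod.smul_snd,
    smul_eq_mul] at hp ⊢
  nlinarith [sq_nonneg c]

lemma IsScaleInvariant.image {A : Set (ℝ × ℝ)} (hA : IsScaleInvariant A)
    (N : Module.End ℝ (ℝ × ℝ)) : IsScaleInvariant (N '' A) := by
  rintro c _ ⟨p, hp, rfl⟩
  exact ⟨c • p, hA c p hp, map_smul N c p⟩

lemma isScaleInvariant_iInter {ι : Sort*} {A : ι → Set (ℝ × ℝ)} (hA : ∀ i, IsScaleInvariant (A i)) :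
    IsScaleInvariant (⋂ i, A i) := fun c p hp =>
  mem_iInter.2 fun i => hA i c p (mem_iInter.1 hp i)

variable {A : Set (ℝ × ℝ)}

lemma IsScaleInvariant.sectionParam_sectionCoord_mem (hA : IsScaleInvariant A)
    (hAW : A ⊆ secondFourthQuadrants) {p : ℝ × ℝ} (hp : p ∈ A) (h0 : p ≠ 0) :
    sectionParam (sectionCoord p) ∈ sectionLine ∩ A := by
  have hσ := sub_ne_zero_of_mem_secondFourthQuadrants (hAW hp) h0
  refine ⟨sectionParam_mem_sectionLine _, ?_⟩
  convert hA (p.2 - p.1)⁻¹ p hp using 1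
  rw [eq_inv_smul_iff₀ hσ, smul_sectionParam_sectionCoord hσ]

lemma IsScaleInvariant.eq_of_sectionLine_inter_eq (hA : IsScaleInvariant A)
    (hAW : A ⊆ secondFourthQuadrants) {z : ℝ × ℝ} (hz : sectionLine ∩ A = {z}) :
    A = {p | ∃ c : ℝ, p = c • z} := by
  have hzA : z ∈ A := (hz.symm.subset rfl).2
  ext p
  refine ⟨fun hp => ?_, fun ⟨c, hc⟩ => hc ▸ hA c z hzA⟩
  by_cases h0 : p = 0
  · exact ⟨0, by rw [h0, zero_smul]⟩
  refine ⟨p.2 - p.1, ?_⟩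
  have hmem : sectionParam (sectionCoord p) = z := by
    simpa [hz] using hA.sectionParam_sectionCoord_mem hAW hp h0
  rw [← hmem, smul_sectionParam_sectionCoord
    (sub_ne_zero_of_mem_secondFourthQuadrants (hAW hp) h0)]

end ScaleInvariant

section Contraction

variable {s r δ c d : ℝ}

lemma cross_ratio_le_of_le (hs : 0 < s) (hsr : s ≤ r) (hδ : 0 ≤ δ) (hc : -1 + δ ≤ c)
    (hcd : c ≤ d) (hd : d ≤ -δ) :
    (d - c) * (s * r) ≤ (1 - δ) * ((-c * s + (c + 1) * r) * (-d * s + (d + 1) * r)) := by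
  have hdc : 0 ≤ d - c := by linarith
  have hec : s ≤ -c * s + (c + 1) * r := by
    nlinarith [mul_nonneg (by linarith : 0 ≤ c + 1) (sub_nonneg.2 hsr)]
  have hed : s ≤ -d * s + (d + 1) * r := by
    nlinarith [mul_nonneg (by linarith : 0 ≤ d + 1) (sub_nonneg.2 hsr)]
  calc (d - c) * (s * r) ≤ (-c * s + (c + 1) * r) * ((d - c) * r) := by
        nlinarith [mul_le_mul_of_nonneg_right hec (mul_nonneg hdc (hs.le.trans hsr))]
    _ ≤ (-c * s + (c + 1) * r) * (-c * (-d * s + (d + 1) * r)) := by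
        refine mul_le_mul_of_nonneg_left ?_ (hs.le.trans hec)
        nlinarith [mul_nonneg (by linarith : 0 ≤ -d) (hs.le.trans hec)]
    _ ≤ (1 - δ) * ((-c * s + (c + 1) * r) * (-d * s + (d + 1) * r)) := by
        nlinarith [mul_nonneg (hs.le.trans hec) (hs.le.trans hed)]

/-- For the affine `e t = -t * s + (t + 1) * r` (so `e (-1) = s`, `e 0 = r`) this reads
`(d - c) * e (-1) * e 0 ≤ (1 - δ) * e c * e d`: under a Möbius map with denominator `e`, the
image of `[c, d]` is at most `1 - δ` times as long as the image of `[-1, 0]`. The reflection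
`t ↦ -1 - t` swaps `s` and `r`, reducing to the case `s ≤ r`. -/
lemma cross_ratio_le (hs : 0 < s) (hr : 0 < r) (hδ : 0 ≤ δ) (hc : -1 + δ ≤ c)
    (hcd : c ≤ d) (hd : d ≤ -δ) :
    (d - c) * (s * r) ≤ (1 - δ) * ((-c * s + (c + 1) * r) * (-d * s + (d + 1) * r)) := by
  rcases le_total s r with hsr | hrs
  · exact cross_ratio_le_of_le hs hsr hδ hc hcd hd
  · have := cross_ratio_le_of_le hr hrs hδ (c := -1 - d) (d := -1 - c)
      (by linarith) (by linarith) (by linarith)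
    convert this using 2 <;> ring

end Contraction

section SegmentContraction

variable {P Q : ℝ × ℝ} {δ c d : ℝ}

lemma sectionCoord_sub_sectionCoord {p q : ℝ × ℝ} (hp : p.2 - p.1 ≠ 0) (hq : q.2 - q.1 ≠ 0) :
    sectionCoord q - sectionCoord p = (p.2 * q.1 - p.1 * q.2) / ((p.2 - p.1) * (q.2 - q.1)) := by
  rw [sectionCoord, sectionCoord, div_sub_div _ _ hq hp]
  ring

lemma sectionCoord_neg (p : ℝ × ℝ) : sectionCoord (-p) = sectionCoord p := by
  simpa using sectionCoord_smul (neg_ne_zero.2 one_ne_zero) p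

lemma segment_snd_sub_fst (P Q : ℝ × ℝ) (t : ℝ) :
    ((-t) • P + (t + 1) • Q).2 - ((-t) • P + (t + 1) • Q).1 =
      -t * (P.2 - P.1) + (t + 1) * (Q.2 - Q.1) := by
  simp only [Prod.fst_add, Prod.snd_add, Prod.smul_fst, Prod.smul_snd, smul_eq_mul]
  ring

lemma abs_sectionCoord_segment_sub_le_of_pos (hP : 0 < P.2 - P.1) (hQ : 0 < Q.2 - Q.1)
    (hδ : 0 ≤ δ) (hc : -1 + δ ≤ c) (hcd : c ≤ d) (hd : d ≤ -δ) :
    |sectionCoord ((-d) • P + (d + 1) • Q) - sectionCoord ((-c) • P + (c + 1) • Q)| ≤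
      (1 - δ) * |sectionCoord Q - sectionCoord P| := by
  have hpos : ∀ t ∈ Icc (-1 : ℝ) 0, 0 < -t * (P.2 - P.1) + (t + 1) * (Q.2 - Q.1) :=
    fun t ht => by
      simpa using convex_Ioi (0 : ℝ) hP hQ (a := -t) (b := t + 1) (by linarith [ht.2])
        (by linarith [ht.1]) (by ring)
  have hec := hpos c ⟨by linarith, by linarith⟩
  have hed := hpos d ⟨by linarith, by linarith⟩
  have hω : ((-c) • P + (c + 1) • Q).2 * ((-d) • P + (d + 1) • Q).1 -
      ((-c) • P + (c + 1) • Q).1 * ((-d) • P + (d + 1) • Q).2 =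
        (d - c) * (P.2 * Q.1 - P.1 * Q.2) := by
    simp only [Prod.fst_add, Prod.snd_add, Prod.smul_fst, Prod.smul_snd, smul_eq_mul]
    ring
  rw [sectionCoord_sub_sectionCoord (by rw [segment_snd_sub_fst]; exact hec.ne')
      (by rw [segment_snd_sub_fst]; exact hed.ne'), sectionCoord_sub_sectionCoord hP.ne' hQ.ne',
    hω, segment_snd_sub_fst, segment_snd_sub_fst, abs_div, abs_div, abs_mul,
    abs_of_nonneg (by linarith : 0 ≤ d - c), abs_of_pos (mul_pos hec hed),
    abs_of_pos (mul_pos hP hQ), mul_div_assoc', div_le_div_iff₀ (mul_pos hec hed) (mul_pos hP hQ)]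
  linear_combination mul_le_mul_of_nonneg_left (cross_ratio_le hP hQ hδ hc hcd hd)
    (abs_nonneg (P.2 * Q.1 - P.1 * Q.2))

lemma abs_sectionCoord_segment_sub_le (hPQ : 0 < (P.2 - P.1) * (Q.2 - Q.1))
    (hδ : 0 ≤ δ) (hc : -1 + δ ≤ c) (hcd : c ≤ d) (hd : d ≤ -δ) :
    |sectionCoord ((-d) • P + (d + 1) • Q) - sectionCoord ((-c) • P + (c + 1) • Q)| ≤
      (1 - δ) * |sectionCoord Q - sectionCoord P| := by
  rcases pos_and_pos_or_neg_and_neg_of_mul_pos hPQ with ⟨hP, hQ⟩ | ⟨hP, hQ⟩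
  · exact abs_sectionCoord_segment_sub_le_of_pos hP hQ hδ hc hcd hd
  · have := abs_sectionCoord_segment_sub_le_of_pos (P := -P) (Q := -Q)
      (by simp only [Prod.fst_neg, Prod.snd_neg]; linarith)
      (by simp only [Prod.fst_neg, Prod.snd_neg]; linarith) hδ hc hcd hd
    simpa only [smul_neg, ← neg_add, sectionCoord_neg] using this

lemma mul_pos_of_segment_ne_zero
    (h : ∀ t ∈ Icc (-1 : ℝ) 0, ((-t) • P + (t + 1) • Q).2 - ((-t) • P + (t + 1) • Q).1 ≠ 0) :
    0 < (P.2 - P.1) * (Q.2 - Q.1) := by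
  by_contra! hle
  set f : ℝ → ℝ := fun t => -t * (P.2 - P.1) + (t + 1) * (Q.2 - Q.1) with hf
  have hcont : ContinuousOn f (Icc (-1) 0) := by fun_prop
  have hzero : (0 : ℝ) ∈ f '' Icc (-1) 0 := by
    rcases mul_nonpos_iff.1 hle with ⟨hP, hQ⟩ | ⟨hP, hQ⟩
    · exact intermediate_value_Icc' (by norm_num) hcont
        ⟨by simpa [hf] using hQ, by simpa [hf] using hP⟩
    · exact intermediate_value_Icc (by norm_num) hcont
        ⟨by simpa [hf] using hP, by simpa [hf] using hQ⟩
  obtain ⟨t, ht, hft⟩ := hzero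
  exact h t ht (by rw [segment_snd_sub_fst]; exact hft)

end SegmentContraction

def quadrantsSelfMaps : Submonoid (Module.End ℝ (ℝ × ℝ)) where
  carrier := {N | MapsTo N secondFourthQuadrants secondFourthQuadrants ∧ Function.Injective N}
  mul_mem' hM hN := ⟨hM.1.comp hN.1, hM.2.comp hN.2⟩
  one_mem' := ⟨mapsTo_id _, Function.injective_id⟩

noncomputable def sectionMap (N : Module.End ℝ (ℝ × ℝ)) (t : ℝ) : ℝ :=
  sectionCoord (N (sectionParam t))

section QuadrantsSelfMaps

variable {N : Module.End ℝ (ℝ × ℝ)}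

lemma mem_quadrantsSelfMaps_of_upper {l a n : ℝ} (hl : 0 < l) (ha : a ≤ 0) (hn : 0 < n)
    (hN : ∀ p, N p = (l * p.1 + a * p.2, n * p.2)) : N ∈ quadrantsSelfMaps := by
  refine ⟨fun p hp => ?_, (injective_iff_map_eq_zero N).2 fun p hp => ?_⟩
  · simp only [secondFourthQuadrants, mem_ofPred_eq, hN] at hp ⊢
    nlinarith [mul_nonneg (mul_nonneg (neg_nonneg.2 ha) hn.le) (sq_nonneg p.2), mul_pos hl hn]
  · rw [hN, Prod.mk_eq_zero] at hp
    have h₂ : p.2 = 0 := (mul_eq_zero.1 hp.2).resolve_left hn.ne'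
    simp only [h₂, mul_zero, add_zero] at hp
    exact Prod.ext ((mul_eq_zero.1 hp.1).resolve_left hl.ne') h₂

lemma mem_quadrantsSelfMaps_of_lower {n b l : ℝ} (hn : 0 < n) (hb : b ≤ 0) (hl : 0 < l)
    (hN : ∀ p, N p = (n * p.1, b * p.1 + l * p.2)) : N ∈ quadrantsSelfMaps := by
  refine ⟨fun p hp => ?_, (injective_iff_map_eq_zero N).2 fun p hp => ?_⟩
  · simp only [secondFourthQuadrants, mem_ofPred_eq, hN] at hp ⊢
    nlinarith [mul_nonneg (mul_nonneg (neg_nonneg.2 hb) hn.le) (sq_nonneg p.1), mul_pos hl hn]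
  · rw [hN, Prod.mk_eq_zero] at hp
    have h₁ : p.1 = 0 := (mul_eq_zero.1 hp.1).resolve_left hn.ne'
    simp only [h₁, mul_zero, zero_add] at hp
    exact Prod.ext h₁ ((mul_eq_zero.1 hp.2).resolve_left hl.ne')

lemma apply_sectionParam (N : Module.End ℝ (ℝ × ℝ)) (t : ℝ) :
    N (sectionParam t) = (-t) • N (sectionParam (-1)) + (t + 1) • N (sectionParam 0) := by
  rw [← map_smul, ← map_smul, ← map_add]
  congr 1
  ext <;> simp [sectionParam]

lemma image_mul_subset_image (N : Module.End ℝ (ℝ × ℝ)) {D : Module.End ℝ (ℝ × ℝ)}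
    (hD : MapsTo D secondFourthQuadrants secondFourthQuadrants) :
    (N * D) '' secondFourthQuadrants ⊆ N '' secondFourthQuadrants := by
  rintro _ ⟨w, hw, rfl⟩
  exact ⟨D w, hD hw, rfl⟩

lemma apply_sectionParam_ne_zero (hN : N ∈ quadrantsSelfMaps) (t : ℝ) :
    N (sectionParam t) ≠ 0 :=
  (map_ne_zero_iff N hN.2).2 (sectionParam_ne_zero t)

lemma sectionParam_sectionMap_mem (hN : N ∈ quadrantsSelfMaps) {t : ℝ} (ht : t ∈ Icc (-1) 0) :
    sectionParam (sectionMap N t) ∈ sectionLine ∩ N '' secondFourthQuadrants :=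
  (isScaleInvariant_secondFourthQuadrants.image N).sectionParam_sectionCoord_mem
    (image_subset_iff.2 hN.1) (mem_image_of_mem N (sectionParam_mem_iff.2 ht))
    (apply_sectionParam_ne_zero hN t)

lemma apply_eq_sectionParam_sectionMap {w : ℝ × ℝ} (hNw : N w ∈ sectionLine)
    (hw : w.2 - w.1 ≠ 0) : N w = sectionParam (sectionMap N (sectionCoord w)) := by
  conv_lhs => rw [← sectionParam_sectionCoord_of_mem hNw, ← smul_sectionParam_sectionCoord hw,
    map_smul, sectionCoord_smul hw]
  rfl

lemma abs_sectionMap_sub_le (hN : N ∈ quadrantsSelfMaps) {δ u v : ℝ} (hδ : 0 ≤ δ)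
    (hu : u ∈ Icc (-1 + δ) (-δ)) (hv : v ∈ Icc (-1 + δ) (-δ)) :
    |sectionMap N u - sectionMap N v| ≤ (1 - δ) * |sectionMap N 0 - sectionMap N (-1)| := by
  have hσ : 0 < ((N (sectionParam (-1))).2 - (N (sectionParam (-1))).1) *
      ((N (sectionParam 0)).2 - (N (sectionParam 0)).1) := by
    refine mul_pos_of_segment_ne_zero fun t ht => ?_
    rw [← apply_sectionParam]
    exact sub_ne_zero_of_mem_secondFourthQuadrants (hN.1 (sectionParam_mem_iff.2 ht))
      (apply_sectionParam_ne_zero hN t)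
  have key : ∀ {c d}, c ∈ Icc (-1 + δ) (-δ) → d ∈ Icc (-1 + δ) (-δ) → c ≤ d →
      |sectionMap N d - sectionMap N c| ≤ (1 - δ) * |sectionMap N 0 - sectionMap N (-1)| := by
    intro c d hc hd hcd
    simp only [sectionMap]
    rw [apply_sectionParam N c, apply_sectionParam N d, ← sectionMap, ← sectionMap]
    exact abs_sectionCoord_segment_sub_le hσ hδ hc.1 hcd hd.2
  rcases le_total u v with huv | hvu
  · rw [abs_sub_comm]; exact key hu hv huv
  · exact key hv hu hvu

end QuadrantsSelfMaps

lemma Metric.exists_iInter_eq_singleton_of_tendsto_diam {X : Type*} [MetricSpace X]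
    [CompleteSpace X] {K : ℕ → Set X} (hanti : Antitone K) (hne : ∀ m, (K m).Nonempty)
    (hcl : ∀ m, IsClosed (K m)) (hbdd : ∀ m, Bornology.IsBounded (K m))
    (hdiam : Tendsto (fun m => diam (K m)) atTop (𝓝 0)) : ∃ z, ⋂ m, K m = {z} := by
  obtain ⟨z, hz⟩ := nonempty_iInter_of_nonempty_biInter hcl hbdd
    (fun m => (hne m).mono (subset_iInter₂ fun _ hn => hanti hn)) hdiam
  refine ⟨z, Subset.antisymm (fun p hp => ?_) (singleton_subset_iff.2 hz)⟩
  refine dist_le_zero.1 (ge_of_tendsto' hdiam fun m => ?_)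
  exact dist_le_diam_of_mem (hbdd m) (mem_iInter.1 hp m) (mem_iInter.1 hz m)

lemma le_dist_of_eq_sInf {X : Type*} [PseudoMetricSpace X] {A B : Set X} {δ : ℝ}
    (h : δ = sInf {d | ∃ x ∈ A, ∃ y ∈ B, d = dist x y}) {x y : X} (hx : x ∈ A) (hy : y ∈ B) :
    δ ≤ dist x y :=
  h ▸ csInf_le ⟨0, by rintro _ ⟨_, -, _, -, rfl⟩; exact dist_nonneg⟩ ⟨x, hx, y, hy, rfl⟩

section Cones

variable {N C : Module.End ℝ (ℝ × ℝ)} {δ : ℝ}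

lemma mem_Icc_of_le_dist_frontier {u : ℝ} (hu : u ∈ Icc (-1) 0)
    (hδ : ∀ y ∈ sectionLine ∩ frontier secondFourthQuadrants, δ ≤ dist (sectionParam u) y) :
    u ∈ Icc (-1 + δ) (-δ) := by
  have h₁ := hδ _ ⟨sectionParam_mem_sectionLine _, sectionParam_neg_one_mem_frontier⟩
  have h₂ := hδ _ ⟨sectionParam_mem_sectionLine _, sectionParam_zero_mem_frontier⟩
  rw [isometry_sectionParam.dist_eq, Real.dist_eq, abs_of_nonneg (by linarith [hu.1])] at h₁
  rw [isometry_sectionParam.dist_eq, Real.dist_eq, abs_of_nonpos (by linarith [hu.2])] at h₂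
  constructor <;> linarith

lemma diam_sectionLine_inter_image_mul_le (hN : N ∈ quadrantsSelfMaps)
    (hC : MapsTo C secondFourthQuadrants secondFourthQuadrants) (hδ : 0 ≤ δ) (hδ₁ : δ ≤ 1)
    (hsep : ∀ u, sectionParam u ∈ C '' secondFourthQuadrants → u ∈ Icc (-1 + δ) (-δ)) :
    diam (sectionLine ∩ (N * C) '' secondFourthQuadrants) ≤
      (1 - δ) * diam (sectionLine ∩ N '' secondFourthQuadrants) := by
  have hrepr : ∀ x ∈ sectionLine ∩ (N * C) '' secondFourthQuadrants,
      ∃ u ∈ Icc (-1 + δ) (-δ), x = sectionParam (sectionMap N u) := by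
    rintro _ ⟨hx, w, hw, rfl⟩
    have hCw : C w ≠ 0 := fun h => zero_notMem_sectionLine (by simpa [h] using hx)
    refine ⟨sectionCoord (C w), hsep _ ?_, apply_eq_sectionParam_sectionMap (N := N) (w := C w) hx
      (sub_ne_zero_of_mem_secondFourthQuadrants (hC hw) hCw)⟩
    exact ((isScaleInvariant_secondFourthQuadrants.image C).sectionParam_sectionCoord_mem
      (image_subset_iff.2 hC) (mem_image_of_mem C hw) hCw).2
  have hbdd : Bornology.IsBounded (sectionLine ∩ N '' secondFourthQuadrants) :=
    isBounded_sectionLine_inter.subset (inter_subset_inter_right _ (image_subset_iff.2 hN.1))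
  refine diam_le_of_forall_dist_le (mul_nonneg (sub_nonneg.2 hδ₁) diam_nonneg) fun x hx y hy => ?_
  obtain ⟨u, hu, rfl⟩ := hrepr x hx
  obtain ⟨v, hv, rfl⟩ := hrepr y hy
  calc dist (sectionParam (sectionMap N u)) (sectionParam (sectionMap N v))
      ≤ (1 - δ) * |sectionMap N 0 - sectionMap N (-1)| := by
        rw [isometry_sectionParam.dist_eq, Real.dist_eq]
        exact abs_sectionMap_sub_le hN hδ hu hv
    _ = (1 - δ) * dist (sectionParam (sectionMap N 0)) (sectionParam (sectionMap N (-1))) := by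
        rw [isometry_sectionParam.dist_eq, Real.dist_eq]
    _ ≤ (1 - δ) * diam (sectionLine ∩ N '' secondFourthQuadrants) :=
        mul_le_mul_of_nonneg_left (dist_le_diam_of_mem hbdd
          (sectionParam_sectionMap_mem hN ⟨by norm_num, le_rfl⟩)
          (sectionParam_sectionMap_mem hN ⟨le_rfl, by norm_num⟩)) (sub_nonneg.2 hδ₁)

variable {B C : ℕ → Module.End ℝ (ℝ × ℝ)}

lemma diam_sectionLine_inter_image_le_pow (hB : ∀ m, B m ∈ quadrantsSelfMaps)
    (hC : ∀ m, MapsTo (C m) secondFourthQuadrants secondFourthQuadrants)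
    (hBs : ∀ m, B (m + 1) = B m * C m) (hδ : 0 ≤ δ) (hδ₁ : δ ≤ 1)
    (hsep : ∀ m u, sectionParam u ∈ C m '' secondFourthQuadrants → u ∈ Icc (-1 + δ) (-δ))
    (m : ℕ) : diam (sectionLine ∩ B m '' secondFourthQuadrants) ≤ (1 - δ) ^ m := by
  induction m with
  | zero =>
    rw [pow_zero, ← diam_sectionLine_inter]
    exact diam_mono (inter_subset_inter_right _ (image_subset_iff.2 (hB 0).1))
      isBounded_sectionLine_inter
  | succ m ih =>
    rw [hBs m, pow_succ']
    exact (diam_sectionLine_inter_image_mul_le (hB m) (hC m) hδ hδ₁ (hsep m)).trans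
      (mul_le_mul_of_nonneg_left ih (sub_nonneg.2 hδ₁))

lemma exists_iInter_image_eq_line (hB : ∀ m, B m ∈ quadrantsSelfMaps)
    (hanti : ∀ m, B (m + 1) '' secondFourthQuadrants ⊆ B m '' secondFourthQuadrants)
    (hdiam : Tendsto (fun m => diam (sectionLine ∩ B m '' secondFourthQuadrants)) atTop (𝓝 0)) :
    ∃ v : ℝ × ℝ, v ≠ 0 ∧ ⋂ m, B m '' secondFourthQuadrants = {p | ∃ c : ℝ, p = c • v} := by
  have hW : ∀ m, B m '' secondFourthQuadrants ⊆ secondFourthQuadrants :=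
    fun m => image_subset_iff.2 (hB m).1
  obtain ⟨z, hz⟩ := exists_iInter_eq_singleton_of_tendsto_diam
    (antitone_nat_of_succ_le fun m => inter_subset_inter_right sectionLine (hanti m))
    (fun m => ⟨_, sectionParam_sectionMap_mem (hB m) (t := 0) ⟨by norm_num, le_rfl⟩⟩)
    (fun m => isClosed_sectionLine.inter <|
      (LinearMap.isClosedEmbedding_of_injective (LinearMap.ker_eq_bot.2 (hB m).2)).isClosedMap _
        isClosed_secondFourthQuadrants)
    (fun m => isBounded_sectionLine_inter.subset (inter_subset_inter_right _ (hW m))) hdiam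
  rw [← inter_iInter] at hz
  refine ⟨z, fun h => zero_notMem_sectionLine (h ▸ (hz.symm.subset rfl).1), ?_⟩
  exact (isScaleInvariant_iInter fun m => isScaleInvariant_secondFourthQuadrants.image (B m)
    ).eq_of_sectionLine_inter_eq (iInter_subset_of_subset 0 (hW 0)) hz

end Cones

theorem stmt_13_general (l1 l2 n1 n2 a b : ℝ)
    (h1 : 0 < n1) (h1' : n1 ≤ l1)
    (h2 : 0 < n2) (h2' : n2 ≤ l2)
    (ha' : a < 0)
    (hb' : b < 0)
    (M1 M2 : Module.End ℝ (ℝ × ℝ))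
    (hM1 : ∀ p, M1 p = (l1 * p.1 + a * p.2, n1 * p.2))
    (hM2 : ∀ p, M2 p = (n2 * p.1, b * p.1 + l2 * p.2))
    (W l : Set (ℝ × ℝ))
    (hW : W = {p | p.1 * p.2 ≤ 0})
    (hl : l = {p | p.2 - p.1 = 1})
    (δ : ℝ) (hδ : 0 < δ)
    (hδeq : δ * Metric.diam (l ∩ W) =
      sInf {d | ∃ x ∈ l ∩ (M1 * M2) '' W, ∃ y ∈ l ∩ frontier W, d = dist x y})
    (C : ℕ → Module.End ℝ (ℝ × ℝ))
    (hC : ∀ m, ∃ D ∈ Submonoid.closure ({M1, M2} : Set (Module.End ℝ (ℝ × ℝ))),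
      C m = M1 * M2 * D)
    (B : ℕ → Module.End ℝ (ℝ × ℝ))
    (hB0 : B 0 ∈ Submonoid.closure ({M1, M2} : Set (Module.End ℝ (ℝ × ℝ))))
    (hBs : ∀ m, B (m + 1) = B m * C m) :
    (∀ m, Metric.diam (l ∩ B m '' W) ≤ (1 - δ) ^ m * Metric.diam (l ∩ W)) ∧
    ∃ v : ℝ × ℝ, v ≠ 0 ∧ (⋂ m, B m '' W) = {p | ∃ c : ℝ, p = c • v} := by
  obtain rfl : W = secondFourthQuadrants := hW
  obtain rfl : l = sectionLine := hl
  rw [diam_sectionLine_inter, mul_one] at hδeq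
  have hgen : Submonoid.closure {M1, M2} ≤ quadrantsSelfMaps := Submonoid.closure_le.2 <|
    insert_subset_iff.2 ⟨mem_quadrantsSelfMaps_of_upper (h1.trans_le h1') ha'.le h1 hM1,
      singleton_subset_iff.2 (mem_quadrantsSelfMaps_of_lower h2 hb'.le (h2.trans_le h2') hM2)⟩
  have hM12 : M1 * M2 ∈ quadrantsSelfMaps :=
    hgen (mul_mem (Submonoid.subset_closure (by simp)) (Submonoid.subset_closure (by simp)))
  have hsep : ∀ u, sectionParam u ∈ (M1 * M2) '' secondFourthQuadrants →
      u ∈ Icc (-1 + δ) (-δ) := fun u hu =>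
    mem_Icc_of_le_dist_frontier (sectionParam_mem_iff.1 (image_subset_iff.2 hM12.1 hu))
      fun y hy => le_dist_of_eq_sInf hδeq ⟨sectionParam_mem_sectionLine u, hu⟩ hy
  choose D hD hCD using hC
  have hCS : ∀ m, C m ∈ quadrantsSelfMaps := fun m => hCD m ▸ mul_mem hM12 (hgen (hD m))
  have hCsep : ∀ m u, sectionParam u ∈ C m '' secondFourthQuadrants → u ∈ Icc (-1 + δ) (-δ) :=
    fun m u hu => hsep u (image_mul_subset_image _ (hgen (hD m)).1 (hCD m ▸ hu))
  have hδ₁ : δ ≤ 1 := by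
    have := hsep _ (sectionParam_sectionMap_mem hM12 (t := 0) ⟨by norm_num, le_rfl⟩).2
    linarith [this.1.trans this.2]
  have hB : ∀ m, B m ∈ quadrantsSelfMaps := fun m => by
    induction m with
    | zero => exact hgen hB0
    | succ m ih => exact hBs m ▸ mul_mem ih (hCS m)
  have hdiam := diam_sectionLine_inter_image_le_pow hB (fun m => (hCS m).1) hBs hδ.le hδ₁ hCsep
  refine ⟨fun m => by rw [diam_sectionLine_inter, mul_one]; exact hdiam m,
    exists_iInter_image_eq_line hB (fun m => hBs m ▸ image_mul_subset_image _ (hCS m).1) ?_⟩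
  exact squeeze_zero (fun _ => diam_nonneg) hdiam
    (tendsto_pow_atTop_nhds_zero_of_lt_one (by linarith) (by linarith))

/-- Geometric decay of the cones `B_m(W)` and convergence to a line: with
`M₁, M₂` the matrices with `α, β < 0`, `δ > 0` the projective-contraction constant
for `V = M₁M₂(W)`, and `B_{m+1} = B_m C_m` where each block `C_m` is a product of
`M₁`'s and `M₂`'s beginning with `M₁M₂` (and `B₀` any product of `M₁`'s and
`M₂`'s), one has `diam(ℓ ∩ B_m W) ≤ (1−δ)^m diam(ℓ ∩ W)` for all `m`, and the
nested cones `B_m(W)` intersect in a single line through the origin. -/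
theorem stmt_13 (l1 l2 n1 n2 a b : ℝ)
    (h1 : 0 < n1) (h1' : n1 ≤ l1) (h1'' : l1 < 1)
    (h2 : 0 < n2) (h2' : n2 ≤ l2) (h2'' : l2 < 1)
    (ha : a = n2 + l1 - 1) (ha' : a < 0)
    (hb : b = n1 + l2 - 1) (hb' : b < 0)
    (M1 M2 : Module.End ℝ (ℝ × ℝ))
    (hM1 : ∀ p, M1 p = (l1 * p.1 + a * p.2, n1 * p.2))
    (hM2 : ∀ p, M2 p = (n2 * p.1, b * p.1 + l2 * p.2))
    (W l : Set (ℝ × ℝ))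
    (hW : W = {p | p.1 * p.2 ≤ 0})
    (hl : l = {p | p.2 - p.1 = 1})
    (δ : ℝ) (hδ : 0 < δ)
    (hδeq : δ * Metric.diam (l ∩ W) =
      sInf {d | ∃ x ∈ l ∩ (M1 * M2) '' W, ∃ y ∈ l ∩ frontier W, d = dist x y})
    (C : ℕ → Module.End ℝ (ℝ × ℝ))
    (hC : ∀ m, ∃ D ∈ Submonoid.closure ({M1, M2} : Set (Module.End ℝ (ℝ × ℝ))),
      C m = M1 * M2 * D)
    (B : ℕ → Module.End ℝ (ℝ × ℝ))
    (hB0 : B 0 ∈ Submonoid.closure ({M1, M2} : Set (Module.End ℝ (ℝ × ℝ))))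
    (hBs : ∀ m, B (m + 1) = B m * C m) :
    (∀ m, Metric.diam (l ∩ B m '' W) ≤ (1 - δ) ^ m * Metric.diam (l ∩ W)) ∧
    ∃ v : ℝ × ℝ, v ≠ 0 ∧ (⋂ m, B m '' W) = {p | ∃ c : ℝ, p = c • v} :=
  stmt_13_general l1 l2 n1 n2 a b h1 h1' h2 h2' ha' hb' M1 M2 hM1 hM2 W l hW hl δ hδ hδeq C hC B hB0
    hBs
end

section
/- For the matrix M₁ = [[λ₁, α],[0, ν₁]] with 0 < ν₁ ≤ λ₁ < 1 and α < 0, the intersection of the nested cones M₁ⁿ(W), n = 1, 2, ..., where W is the union of the second and fourth quadrants, equals the horizontal line ℝ·e₁ = {(r, 0) : r ∈ ℝ}. -/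
/-!
Track the ratio `r = p.1 / p.2`: the map `(x, y) ↦ (λ x + α y, ν y)` sends it to
`(λ / ν) r + α / ν`, and since `λ / ν ≥ 1` this lowers every `r ≤ 0` by at least `|α| / ν`.
So a point of `Mⁿ(W)` off the horizontal axis has ratio at most `n α / ν`, and no ratio
survives all `n`. The horizontal axis lies in `W` and is mapped onto itself.
-/

open Set

/-- The linear map of the matrix `[[l, a], [0, n]]`. -/
def upperTriMap (l a n : ℝ) (p : ℝ × ℝ) : ℝ × ℝ := (l * p.1 + a * p.2, n * p.2)

/-- The points with `p.1 / p.2 ≤ t`, together with the horizontal axis. -/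
def ratioLe (t : ℝ) : Set (ℝ × ℝ) := {p | p.1 * p.2 ≤ t * p.2 ^ 2}

lemma ratioLe_zero : ratioLe 0 = {p : ℝ × ℝ | p.1 * p.2 ≤ 0} := by
  simp [ratioLe]

lemma horizontalAxis_subset_ratioLe (t : ℝ) : {p : ℝ × ℝ | p.2 = 0} ⊆ ratioLe t := by
  intro p hp
  simp [ratioLe, mem_ofPred_eq.mp hp]

section

variable {l a n : ℝ}

lemma mapsTo_upperTriMap_ratioLe {t : ℝ} (hn : 0 < n) (hnl : n ≤ l) (ht : t ≤ 0) :
    MapsTo (upperTriMap l a n) (ratioLe t) (ratioLe (t + a / n)) := by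
  intro q hq
  simp only [ratioLe, upperTriMap, mem_ofPred_eq] at hq ⊢
  have hlt : l * t ≤ n * t := mul_le_mul_of_nonpos_right hnl ht
  calc (l * q.1 + a * q.2) * (n * q.2)
      = l * n * (q.1 * q.2) + a * n * q.2 ^ 2 := by ring
    _ ≤ l * n * (t * q.2 ^ 2) + a * n * q.2 ^ 2 := by
        gcongr
        exact mul_nonneg (hn.le.trans hnl) hn.le
    _ = n * (l * t) * q.2 ^ 2 + a * n * q.2 ^ 2 := by ring
    _ ≤ n * (n * t) * q.2 ^ 2 + a * n * q.2 ^ 2 := by gcongr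
    _ = (t + a / n) * (n * q.2) ^ 2 := by field_simp

lemma mapsTo_iterate_upperTriMap_ratioLe (hn : 0 < n) (hnl : n ≤ l) (ha : a ≤ 0) (N : ℕ) :
    MapsTo (upperTriMap l a n)^[N] (ratioLe 0) (ratioLe (N * (a / n))) := by
  induction N with
  | zero => simpa using mapsTo_id (ratioLe 0)
  | succ N ih =>
    rw [Function.iterate_succ']
    have hstep : (N : ℝ) * (a / n) ≤ 0 :=
      mul_nonpos_of_nonneg_of_nonpos N.cast_nonneg (div_nonpos_of_nonpos_of_nonneg ha hn.le)
    simpa [add_mul] using (mapsTo_upperTriMap_ratioLe hn hnl hstep).comp ih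

lemma surjOn_upperTriMap_horizontalAxis (hl : l ≠ 0) :
    SurjOn (upperTriMap l a n) {p | p.2 = 0} {p | p.2 = 0} := by
  rintro ⟨x, _⟩ rfl
  exact ⟨(x / l, 0), rfl, by simp [upperTriMap, mul_div_cancel₀ x hl]⟩

end

lemma eq_zero_of_forall_mem_ratioLe {c : ℝ} {p : ℝ × ℝ} (hc : c < 0)
    (h : ∀ N : ℕ, p ∈ ratioLe ((N + 1) * c)) : p.2 = 0 := by
  by_contra hp
  have hd : 0 < -c * p.2 ^ 2 := mul_pos (neg_pos.mpr hc) (by positivity)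
  obtain ⟨N, hN⟩ := exists_nat_gt (-(p.1 * p.2) / (-c * p.2 ^ 2))
  have hbound := h N
  simp only [ratioLe, mem_ofPred_eq] at hbound
  rw [div_lt_iff₀ hd] at hN
  nlinarith

theorem stmt_14_general (l1 n1 a : ℝ) (h1 : 0 < n1) (h2 : n1 ≤ l1)
    (ha : a < 0)
    (M : ℝ × ℝ → ℝ × ℝ) (hM : ∀ p, M p = (l1 * p.1 + a * p.2, n1 * p.2))
    (W : Set (ℝ × ℝ)) (hW : W = {p | p.1 * p.2 ≤ 0}) :
    (⋂ n : ℕ, M^[n + 1] '' W) = {p : ℝ × ℝ | p.2 = 0} := by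
  obtain rfl : M = upperTriMap l1 a n1 := funext hM
  rw [hW, ← ratioLe_zero]
  apply Subset.antisymm
  · refine fun p hp => eq_zero_of_forall_mem_ratioLe (div_neg_of_neg_of_pos ha h1) fun N => ?_
    have hmaps := mapsTo_iterate_upperTriMap_ratioLe h1 h2 ha.le (N + 1)
    exact_mod_cast hmaps.image_subset (mem_iInter.mp hp N)
  · refine subset_iInter fun N => ?_
    calc {p : ℝ × ℝ | p.2 = 0}
        ⊆ (upperTriMap l1 a n1)^[N + 1] '' {p : ℝ × ℝ | p.2 = 0} :=
          (surjOn_upperTriMap_horizontalAxis (h1.trans_le h2).ne').iterate _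
      _ ⊆ _ := image_mono (horizontalAxis_subset_ratioLe 0)

/-- Remark 14: for `M₁ = [[λ₁,α],[0,ν₁]]` with `0 < ν₁ ≤ λ₁ < 1` and `α < 0`, the
nested cones `M₁ⁿ(W)`, `n ≥ 1`, where `W` is the union of the second and fourth
quadrants, intersect exactly in the horizontal line `ℝ·e₁`. -/
theorem stmt_14 (l1 n1 a : ℝ) (h1 : 0 < n1) (h2 : n1 ≤ l1) (h3 : l1 < 1)
    (ha : a < 0)
    (M : ℝ × ℝ → ℝ × ℝ) (hM : ∀ p, M p = (l1 * p.1 + a * p.2, n1 * p.2))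
    (W : Set (ℝ × ℝ)) (hW : W = {p | p.1 * p.2 ≤ 0}) :
    (⋂ n : ℕ, M^[n + 1] '' W) = {p : ℝ × ℝ | p.2 = 0} :=
  stmt_14_general l1 n1 a h1 h2 ha M hM W hW
end

section
/- The parabolic arc P = {(w₁, w₂) ∈ [0,1]² : √w₁ + √w₂ = 1} admits, for every λ₁ ∈ (0,1), a self-affine representation P = f₁(P) ∪ f₂(P) with the maps from the standard family where λ₂ = 1 − λ₁, ν₁ = λ₁², ν₂ = λ₂². -/
/-!
Parametrize the arc by `γ t = (t², (1 - t)²)` (`parabolaPoint`), `t ∈ [0, 1]`. Both maps are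
semiconjugate through `γ` to affine contractions of the parameter: `f₁ ∘ γ = γ ∘ (t ↦ λ₁ t + λ₂)`
and `f₂ ∘ γ = γ ∘ (t ↦ λ₂ t)`. These send `[0, 1]` onto `[λ₂, 1]` and `[0, λ₂]`, which cover
`[0, 1]`.
-/

open Set

def parabolaPoint (t : ℝ) : ℝ × ℝ := (t ^ 2, (1 - t) ^ 2)

lemma setOf_sqrt_add_sqrt_eq_one :
    {p : ℝ × ℝ | p.1 ∈ Icc (0 : ℝ) 1 ∧ p.2 ∈ Icc (0 : ℝ) 1 ∧ √p.1 + √p.2 = 1} =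
      parabolaPoint '' Icc 0 1 := by
  ext ⟨x, y⟩
  simp only [mem_ofPred_eq, mem_image, mem_Icc, parabolaPoint, Prod.mk.injEq]
  constructor
  · rintro ⟨⟨hx, -⟩, ⟨hy, -⟩, hsum⟩
    refine ⟨√x, ⟨Real.sqrt_nonneg x, by linarith [Real.sqrt_nonneg y]⟩, Real.sq_sqrt hx, ?_⟩
    rw [← hsum, add_sub_cancel_left, Real.sq_sqrt hy]
  · rintro ⟨t, ⟨ht0, ht1⟩, rfl, rfl⟩
    refine ⟨⟨by positivity, by nlinarith⟩, ⟨by positivity, by nlinarith⟩, ?_⟩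
    rw [Real.sqrt_sq ht0, Real.sqrt_sq (sub_nonneg.2 ht1), add_sub_cancel]

/-- Example 16: for every `λ₁ ∈ (0,1)`, the parabolic arc
`P = {(w₁,w₂) ∈ [0,1]² : √w₁ + √w₂ = 1}` is self-affine for the standard family of
maps with `λ₂ = 1 − λ₁`, `ν₁ = λ₁²`, `ν₂ = λ₂²`: `P = f₁(P) ∪ f₂(P)`. -/
theorem stmt_15 (l1 l2 n1 n2 a b : ℝ) (hl1 : 0 < l1) (hl1' : l1 < 1)
    (hl2 : l2 = 1 - l1) (hn1 : n1 = l1 ^ 2) (hn2 : n2 = l2 ^ 2)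
    (ha : a = n2 + l1 - 1) (hb : b = n1 + l2 - 1)
    (f1 f2 : ℝ × ℝ → ℝ × ℝ)
    (hf1 : ∀ p, f1 p = (l1 * p.1 + a * p.2 + (1 - l1), n1 * p.2))
    (hf2 : ∀ p, f2 p = (n2 * p.1, b * p.1 + l2 * p.2 + (1 - l2)))
    (P : Set (ℝ × ℝ))
    (hP : P = {p | p.1 ∈ Set.Icc (0 : ℝ) 1 ∧ p.2 ∈ Set.Icc (0 : ℝ) 1 ∧
      Real.sqrt p.1 + Real.sqrt p.2 = 1}) :
    f1 '' P ∪ f2 '' P = P := by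
  subst hl2 hn1 hn2 ha hb hP
  have hf1γ : f1 ∘ parabolaPoint = parabolaPoint ∘ (l1 * · + (1 - l1)) := by
    ext t <;> simp only [Function.comp_apply, hf1, parabolaPoint] <;> ring
  have hf2γ : f2 ∘ parabolaPoint = parabolaPoint ∘ ((1 - l1) * ·) := by
    ext t <;> simp only [Function.comp_apply, hf2, parabolaPoint] <;> ring
  rw [setOf_sqrt_add_sqrt_eq_one, ← image_comp, ← image_comp, hf1γ, hf2γ, image_comp, image_comp,
    image_affine_Icc' hl1, image_mul_left_Icc' (sub_pos.2 hl1'), ← image_union]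
  simp only [mul_zero, zero_add, mul_one, add_sub_cancel]
  rw [union_comm, Icc_union_Icc_eq_Icc (sub_nonneg.2 hl1'.le) (sub_le_self 1 hl1.le)]
end

section
/- Let y : [0, ε) → ℝ be C² with y(0) = 0, y'(0) = 0, y''(0) ≠ 0. Suppose there are constants λ, ν with 0 < |λ|, |ν| < 1 and γ ∈ ℝ (with γ = 0 if λ ≠ ν) such that the graph of y is mapped into itself by the linear map h = [[λ, γ],[0, ν]], i.e. ν·y(x) = y(λx + γ·y(x)) for all sufficiently small x ≥ 0. Then ν = λ², γ = 0, and y(x) = y''(0)·x²/2 on a neighborhood of 0; i.e. the graph is a parabolic arc near 0. -/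
/-!
Differentiating `ν y(x) = y(λx + γ y(x))` once gives `ν y' = (y' ∘ z) · z'` with
`z(x) = λx + γ y(x)`; differentiating again at `0`, where `z(0) = 0` and `y'(0) = 0`, gives
`ν y''(0) = λ² y''(0)`, so `ν = λ²`. As `λ ≠ λ²` for `0 < |λ| < 1`, the hypothesis forces `γ = 0`,
and the equation becomes `y(λx) = λ² y(x)`. Differentiating twice yields `y''(x) = y''(λx)`, hence
`y''(x) = y''(λⁿx) → y''(0)`, so `y''` is constant and `y` is the parabola `y''(0) x² / 2`.
-/

open Set Filter Topology

theorem UniqueDiffWithinAt.eq_deriv_of_eqOn {s : Set ℝ} {f g : ℝ → ℝ} {a b x : ℝ}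
    (hu : UniqueDiffWithinAt ℝ s x) (hx : x ∈ s) (hfg : EqOn f g s)
    (hf : HasDerivWithinAt f a s x) (hg : HasDerivWithinAt g b s x) : a = b :=
  hu.eq_deriv s hf (hg.congr hfg (hfg hx))

theorem Convex.eqOn_of_hasDerivWithinAt_eq {E : Type*} [NormedAddCommGroup E] [NormedSpace ℝ E]
    {s : Set ℝ} (hs : Convex ℝ s) {f g f' : ℝ → E}
    (hf : ∀ t ∈ s, HasDerivWithinAt f (f' t) s t) (hg : ∀ t ∈ s, HasDerivWithinAt g (f' t) s t)
    {a : ℝ} (ha : a ∈ s) (hfga : f a = g a) : EqOn f g s := fun x hx => by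
  have h := hs.norm_image_sub_le_of_norm_hasDerivWithin_le (f := f - g) (C := 0)
    (fun t ht => by simpa using (hf t ht).sub (hg t ht)) (fun _ _ => by simp) ha hx
  rwa [zero_mul, norm_le_zero_iff, Pi.sub_apply, Pi.sub_apply, hfga, sub_self, sub_zero,
    sub_eq_zero] at h

theorem self_ne_sq_of_abs_lt_one {a : ℝ} (h0 : a ≠ 0) (h1 : |a| < 1) : a ≠ a ^ 2 := by
  intro h
  have : a * (a - 1) = 0 := by linear_combination -h
  rcases mul_eq_zero.1 this with h | h
  · exact h0 h
  · rw [sub_eq_zero.1 h, abs_one] at h1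
    exact lt_irrefl 1 h1

theorem eq_apply_zero_of_forall_eq_apply_mul {s : Set ℝ} {g : ℝ → ℝ} {lam : ℝ} (hlam : |lam| < 1)
    (hmaps : MapsTo (lam * ·) s s) (hg : ContinuousWithinAt g s 0)
    (hinv : ∀ x ∈ s, g x = g (lam * x)) {x : ℝ} (hx : x ∈ s) : g x = g 0 := by
  have hmem : ∀ n : ℕ, lam ^ n * x ∈ s := fun n => by
    simpa only [mul_left_iterate_apply] using hmaps.iterate n hx
  have horbit : ∀ n : ℕ, g (lam ^ n * x) = g x := by
    intro n
    induction n with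
    | zero => simp
    | succ n ih => rw [pow_succ', mul_assoc, ← hinv _ (hmem n), ih]
  have hto0 : Tendsto (fun n : ℕ => lam ^ n * x) atTop (𝓝[s] 0) := by
    refine tendsto_nhdsWithin_iff.2 ⟨?_, Eventually.of_forall hmem⟩
    simpa using (tendsto_pow_atTop_nhds_zero_of_abs_lt_one hlam).mul_const x
  refine tendsto_nhds_unique ?_ (hg.tendsto.comp hto0)
  simp only [Function.comp_def, horbit, tendsto_const_nhds]

theorem Convex.eqOn_mul_sq_div_two {s : Set ℝ} (hs : Convex ℝ s) (h0s : 0 ∈ s)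
    {y y' : ℝ → ℝ} {c : ℝ} (hy : ∀ x ∈ s, HasDerivWithinAt y (y' x) s x)
    (hy' : ∀ x ∈ s, HasDerivWithinAt y' c s x) (h0 : y 0 = 0) (h0' : y' 0 = 0) :
    EqOn y (fun x => c * x ^ 2 / 2) s := by
  have hlin : EqOn y' (c * ·) s := hs.eqOn_of_hasDerivWithinAt_eq hy'
    (fun x _ => by simpa using (hasDerivWithinAt_id x s).const_mul c) h0s (by simp [h0'])
  refine hs.eqOn_of_hasDerivWithinAt_eq hy (fun x hx => ?_) h0s (by simp [h0])
  convert (((hasDerivAt_pow 2 x).const_mul c).div_const 2).hasDerivWithinAt using 1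
  rw [hlin hx]
  ring

section FunctionalEquation

variable {s : Set ℝ} {y y' y'' : ℝ → ℝ} {lam nu gam : ℝ}

theorem HasDerivWithinAt.const_mul_id_add_const_mul {d x : ℝ} (hy : HasDerivWithinAt y d s x) :
    HasDerivWithinAt (fun t => lam * t + gam * y t) (lam + gam * d) s x := by
  simpa using ((hasDerivWithinAt_id x s).const_mul lam).fun_add (hy.const_mul gam)

theorem const_mul_deriv_eq_of_const_mul_eq_comp (hu : UniqueDiffOn ℝ s)
    (hy : ∀ x ∈ s, HasDerivWithinAt y (y' x) s x)
    (hmaps : MapsTo (fun t => lam * t + gam * y t) s s)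
    (hfe : ∀ x ∈ s, nu * y x = y (lam * x + gam * y x)) :
    ∀ x ∈ s, nu * y' x = y' (lam * x + gam * y x) * (lam + gam * y' x) := fun x hx =>
  (hu x hx).eq_deriv_of_eqOn hx hfe ((hy x hx).const_mul nu)
    ((hy _ (hmaps hx)).comp x (hy x hx).const_mul_id_add_const_mul hmaps)

theorem eq_sq_of_const_mul_deriv_eq_comp (hu : UniqueDiffWithinAt ℝ s 0) (h0s : 0 ∈ s)
    (hy : ∀ x ∈ s, HasDerivWithinAt y (y' x) s x) (hy' : ∀ x ∈ s, HasDerivWithinAt y' (y'' x) s x)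
    (hmaps : MapsTo (fun t => lam * t + gam * y t) s s)
    (h0 : y 0 = 0) (h0' : y' 0 = 0) (h0'' : y'' 0 ≠ 0)
    (hfe : ∀ x ∈ s, nu * y' x = y' (lam * x + gam * y x) * (lam + gam * y' x)) :
    nu = lam ^ 2 := by
  have hz0 : lam * 0 + gam * y 0 = 0 := by simp [h0]
  have hy'z := (hy' _ (hmaps h0s)).comp 0 (hy 0 h0s).const_mul_id_add_const_mul hmaps
  have hz' : HasDerivWithinAt (fun t => lam + gam * y' t) (gam * y'' 0) s 0 := by
    simpa using ((hy' 0 h0s).const_mul gam).const_add lam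
  -- at `0` the product rule loses the term `y'(z 0) · z''(0)`, as `y'(z 0) = y'(0) = 0`
  have h := (hu.eq_deriv_of_eqOn h0s hfe ((hy' 0 h0s).const_mul nu) (hy'z.fun_mul hz'))
  simp only [Function.comp_apply, hz0, h0'] at h
  exact mul_right_cancel₀ h0'' (by linear_combination h)

theorem deriv2_eq_deriv2_mul (hu : UniqueDiffOn ℝ s) (hlam : lam ≠ 0)
    (hy' : ∀ x ∈ s, HasDerivWithinAt y' (y'' x) s x) (hmaps : MapsTo (lam * ·) s s)
    (hfe : ∀ x ∈ s, lam ^ 2 * y' x = y' (lam * x) * lam) :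
    ∀ x ∈ s, y'' x = y'' (lam * x) := fun x hx => by
  have h := (hu x hx).eq_deriv_of_eqOn hx hfe ((hy' x hx).const_mul (lam ^ 2))
    (((hy' _ (hmaps hx)).comp x ((hasDerivWithinAt_id x s).const_mul lam) hmaps).mul_const lam)
  exact mul_left_cancel₀ (pow_ne_zero 2 hlam) (by linear_combination h)

end FunctionalEquation

theorem stmt_17_general (ε : ℝ) (hε : 0 < ε) (y y' y'' : ℝ → ℝ)
    (hder1 : ∀ x ∈ Set.Ico 0 ε, HasDerivWithinAt y (y' x) (Set.Ico 0 ε) x)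
    (hder2 : ∀ x ∈ Set.Ico 0 ε, HasDerivWithinAt y' (y'' x) (Set.Ico 0 ε) x)
    (hcont : ContinuousOn y'' (Set.Ico 0 ε))
    (h0 : y 0 = 0) (h0' : y' 0 = 0) (h0'' : y'' 0 ≠ 0)
    (lam nu gam : ℝ)
    (hlam : 0 < |lam|) (hlam1 : |lam| < 1)
    (hgam : lam ≠ nu → gam = 0)
    (hfe : ∀ x ∈ Set.Ico 0 ε,
      lam * x + gam * y x ∈ Set.Ico 0 ε ∧ nu * y x = y (lam * x + gam * y x)) :
    nu = lam ^ 2 ∧ gam = 0 ∧ ∀ x ∈ Set.Ico 0 ε, y x = y'' 0 * x ^ 2 / 2 := by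
  set s := Ico 0 ε
  have h0s : (0 : ℝ) ∈ s := ⟨le_rfl, hε⟩
  have hu : UniqueDiffOn ℝ s := uniqueDiffOn_Ico 0 ε
  have hlam0 : lam ≠ 0 := abs_pos.1 hlam
  have hmaps : MapsTo (fun t => lam * t + gam * y t) s s := fun x hx => (hfe x hx).1
  have hfe' := const_mul_deriv_eq_of_const_mul_eq_comp hu hder1 hmaps fun x hx => (hfe x hx).2
  have hnu : nu = lam ^ 2 :=
    eq_sq_of_const_mul_deriv_eq_comp (hu 0 h0s) h0s hder1 hder2 hmaps h0 h0' h0'' hfe'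
  have hgam0 : gam = 0 := hgam (hnu ▸ self_ne_sq_of_abs_lt_one hlam0 hlam1)
  subst hgam0 hnu
  refine ⟨rfl, rfl, ?_⟩
  have hmaps' : MapsTo (lam * ·) s s := by simpa using hmaps
  have hinv := deriv2_eq_deriv2_mul hu hlam0 hder2 hmaps' (by simpa using hfe')
  have hconst : ∀ x ∈ s, y'' x = y'' 0 := fun x hx =>
    eq_apply_zero_of_forall_eq_apply_mul hlam1 hmaps' (hcont 0 h0s) hinv hx
  exact (convex_Ico 0 ε).eqOn_mul_sq_div_two h0s hder1 (fun x hx => hconst x hx ▸ hder2 x hx)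
    h0 h0'

/-- Theorem 3 (i), local rigidity: let `y` be `C²` on `[0, ε)` (with first and
second one-sided derivatives `y'`, `y''`, the latter continuous), `y(0) = 0`,
`y'(0) = 0`, `y''(0) ≠ 0`. Suppose the graph of `y` is mapped into itself by the
contractive linear map `h = [[λ,γ],[0,ν]]` (with `0 < |λ|, |ν| < 1` and `γ = 0`
whenever `λ ≠ ν`), i.e. for `x ∈ [0,ε)` the point `z = λx + γ·y(x)` stays in
`[0,ε)` and `ν·y(x) = y(z)`. Then `ν = λ²`, `γ = 0`, and
`y(x) = y''(0)·x²/2` on `[0, ε)`, so the graph is a parabolic arc. -/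
theorem stmt_17 (ε : ℝ) (hε : 0 < ε) (y y' y'' : ℝ → ℝ)
    (hder1 : ∀ x ∈ Set.Ico 0 ε, HasDerivWithinAt y (y' x) (Set.Ico 0 ε) x)
    (hder2 : ∀ x ∈ Set.Ico 0 ε, HasDerivWithinAt y' (y'' x) (Set.Ico 0 ε) x)
    (hcont : ContinuousOn y'' (Set.Ico 0 ε))
    (h0 : y 0 = 0) (h0' : y' 0 = 0) (h0'' : y'' 0 ≠ 0)
    (lam nu gam : ℝ)
    (hlam : 0 < |lam|) (hlam1 : |lam| < 1)
    (hnu : 0 < |nu|) (hnu1 : |nu| < 1)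
    (hgam : lam ≠ nu → gam = 0)
    (hfe : ∀ x ∈ Set.Ico 0 ε,
      lam * x + gam * y x ∈ Set.Ico 0 ε ∧ nu * y x = y (lam * x + gam * y x)) :
    nu = lam ^ 2 ∧ gam = 0 ∧ ∀ x ∈ Set.Ico 0 ε, y x = y'' 0 * x ^ 2 / 2 :=
  stmt_17_general ε hε y y' y'' hder1 hder2 hcont h0 h0' h0'' lam nu gam hlam hlam1 hgam hfe
end
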